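/- arXiv:1501.07714 — 10 statements merged into one kernel-verified Lean document; each statement's English description precedes it below -/
import Mathlib

section
/- Let X and Y be complex m×n matrices, and let σ_1(X) ≥ σ_2(X) ≥ … ≥ σ_min(m,n)(X) and σ_1(Y) ≥ … ≥ σ_min(m,n)(Y) denote their singular values in nonincreasing order. Then (∑_{i=1}^{min(m,n)} |σ_i(X) − σ_i(Y)|²)^{1/2} ≤ ‖X − Y‖_F, where ‖·‖_F denotes the Frobenius norm. -/
/-!
Write `X v_j = σ_j u_j` and `Y w_k = τ_k z_k` with `v`, `w` orthonormal eigenbases of `XᴴX`, `YᴴY`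
and `u`, `z` orthonormal up to zero vectors. Expanding `v_j` in the basis `w`,
`Re tr (XᴴY) = Re ∑_{j,k} σ_j τ_k ⟪u_j, z_k⟫ ⟪w_k, v_j⟫`, and by AM-GM each coefficient is
bounded by `σ_j τ_k M_jk` for the doubly substochastic matrix
`M_jk = (|⟪u_j, z_k⟫|² + |⟪w_k, v_j⟫|²) / 2`. For nonincreasing nonnegative `σ`, `τ`, Abel
summation in both indices gives `∑ σ_j τ_k M_jk ≤ ∑ σ_j τ_j` (von Neumann's trace inequality).
Since `‖X‖_F² = ∑ σ_j²`, expanding `‖X - Y‖_F² = ‖X‖_F² + ‖Y‖_F² - 2 Re tr (XᴴY)` then bounds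
`∑_j (σ_j - τ_j)²` over all `n` indices.
-/

/-- The singular values of a complex `m × n` matrix, as the nonnegative square roots of the
eigenvalues of `Xᴴ * X` (in some order, given by the eigenvalue enumeration of Mathlib). -/
noncomputable def singValsUnordered {m n : ℕ} (X : Matrix (Fin m) (Fin n) ℂ) : Fin n → ℝ :=
  fun j => Real.sqrt ((Matrix.isHermitian_conjTranspose_mul_self X).eigenvalues j)

open Finset Matrix
open scoped InnerProductSpace

section Substochastic

variable {ι : Type*} [Fintype ι] [LinearOrder ι]

theorem dotProduct_le_dotProduct_of_sum_Iic_le {a c d : ι → ℝ} (ha : Antitone a) (ha0 : 0 ≤ a)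
    (hcd : ∀ t, ∑ j with j ≤ t, c j ≤ ∑ j with j ≤ t, d j) : a ⬝ᵥ c ≤ a ⬝ᵥ d := by
  set e := d - c
  suffices key : ∀ s : Finset ι, (∀ t ∈ s, 0 ≤ ∑ j ∈ s with j ≤ t, e j) →
      ∀ r, 0 ≤ r → (∀ j ∈ s, r ≤ a j) → r * ∑ j ∈ s, e j ≤ ∑ j ∈ s, a j * e j by
    have h := key univ (fun t _ => by simpa [e, Finset.sum_sub_distrib] using hcd t) 0 le_rfl
      (fun j _ => ha0 j)
    simpa [e, dotProduct, mul_sub, Finset.sum_sub_distrib] using h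
  intro s
  induction s using Finset.induction_on_max with
  | empty => simp
  | insert m s hm ih =>
    intro hs r hr hra
    have hms : m ∉ s := fun h => lt_irrefl m (hm m h)
    have hfilter : ∀ t ∈ s, (insert m s).filter (· ≤ t) = s.filter (· ≤ t) := fun t ht => by
      rw [Finset.filter_insert, if_neg (not_le.2 (hm t ht))]
    have htotal : 0 ≤ ∑ j ∈ insert m s, e j := by
      simpa [Finset.filter_true_of_mem fun j hj => (Finset.mem_insert.1 hj).elim le_of_eq
        fun h => (hm j h).le] using hs m (Finset.mem_insert_self m s)
    have ih' := ih (fun t ht => hfilter t ht ▸ hs t (Finset.mem_insert_of_mem ht)) (a m)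
      (hr.trans (hra m (Finset.mem_insert_self m s))) fun j hj => ha (hm j hj).le
    rw [Finset.sum_insert hms] at htotal ⊢
    rw [Finset.sum_insert hms]
    nlinarith [hra m (Finset.mem_insert_self m s)]

theorem sum_sum_le_card_of_substochastic {M : Matrix ι ι ℝ} (hM : ∀ j k, 0 ≤ M j k)
    (hrow : ∀ j, ∑ k, M j k ≤ 1) (hcol : ∀ k, ∑ j, M j k ≤ 1) (s t : ι) :
    ∑ k with k ≤ s, ∑ j with j ≤ t, M j k ≤ #{k | k ≤ s ∧ k ≤ t} := by
  rcases le_total s t with hst | hts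
  · have hcard : #{k | k ≤ s ∧ k ≤ t} = #{k | k ≤ s} := by
      congr 1; ext k; simpa using fun hk => hk.trans hst
    rw [hcard, Finset.card_eq_sum_ones, Nat.cast_sum, Nat.cast_one]
    refine Finset.sum_le_sum fun k _ => ?_
    exact (Finset.sum_le_sum_of_subset_of_nonneg (Finset.filter_subset _ _)
      fun j _ _ => hM j k).trans (hcol k)
  · have hcard : #{k | k ≤ s ∧ k ≤ t} = #{j | j ≤ t} := by
      congr 1; ext k; simpa using fun hk => hk.trans hts
    rw [hcard, Finset.card_eq_sum_ones, Nat.cast_sum, Nat.cast_one, Finset.sum_comm]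
    refine Finset.sum_le_sum fun j _ => ?_
    exact (Finset.sum_le_sum_of_subset_of_nonneg (Finset.filter_subset _ _)
      fun k _ _ => hM j k).trans (hrow j)

theorem dotProduct_mulVec_le_dotProduct_of_substochastic {a b : ι → ℝ} (ha : Antitone a)
    (hb : Antitone b) (ha0 : 0 ≤ a) (hb0 : 0 ≤ b) {M : Matrix ι ι ℝ} (hM : ∀ j k, 0 ≤ M j k)
    (hrow : ∀ j, ∑ k, M j k ≤ 1) (hcol : ∀ k, ∑ j, M j k ≤ 1) : a ⬝ᵥ (M *ᵥ b) ≤ a ⬝ᵥ b := by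
  refine dotProduct_le_dotProduct_of_sum_Iic_le ha ha0 fun t => ?_
  have hlhs : ∑ j with j ≤ t, (M *ᵥ b) j = b ⬝ᵥ fun k => ∑ j with j ≤ t, M j k := by
    simp only [mulVec, dotProduct, Finset.mul_sum]
    rw [Finset.sum_comm]
    simp only [mul_comm]
  have hrhs : ∑ j with j ≤ t, b j = b ⬝ᵥ fun k => if k ≤ t then 1 else 0 := by
    simp [dotProduct, Finset.sum_filter]
  rw [hlhs, hrhs]
  refine dotProduct_le_dotProduct_of_sum_Iic_le hb hb0 fun s => ?_
  simpa [Finset.sum_boole, Finset.filter_filter] using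
    sum_sum_le_card_of_substochastic hM hrow hcol s t

theorem re_sum_mul_le_of_sum_sq_norm_le_one {𝕜 : Type*} [RCLike 𝕜] {σ τ : ι → ℝ}
    (hσ : Antitone σ) (hτ : Antitone τ) (hσ0 : 0 ≤ σ) (hτ0 : 0 ≤ τ) {P Q : ι → ι → 𝕜}
    (hProw : ∀ j, ∑ k, ‖P j k‖ ^ 2 ≤ 1) (hPcol : ∀ k, ∑ j, ‖P j k‖ ^ 2 ≤ 1)
    (hQrow : ∀ j, ∑ k, ‖Q j k‖ ^ 2 ≤ 1) (hQcol : ∀ k, ∑ j, ‖Q j k‖ ^ 2 ≤ 1) :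
    RCLike.re (∑ j, ∑ k, ((σ j * τ k : ℝ) : 𝕜) * (P j k * Q j k)) ≤ σ ⬝ᵥ τ := by
  let M : Matrix ι ι ℝ := fun j k => (‖P j k‖ ^ 2 + ‖Q j k‖ ^ 2) / 2
  have hterm : ∀ j k,
      RCLike.re (((σ j * τ k : ℝ) : 𝕜) * (P j k * Q j k)) ≤ σ j * (M j k * τ k) := by
    intro j k
    have hστ : 0 ≤ σ j * τ k := mul_nonneg (hσ0 j) (hτ0 k)
    calc RCLike.re (((σ j * τ k : ℝ) : 𝕜) * (P j k * Q j k))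
        ≤ ‖((σ j * τ k : ℝ) : 𝕜) * (P j k * Q j k)‖ := RCLike.re_le_norm _
      _ = σ j * τ k * (‖P j k‖ * ‖Q j k‖) := by
        rw [norm_mul, norm_mul, RCLike.norm_ofReal, abs_of_nonneg hστ]
      _ ≤ σ j * τ k * M j k := by
        gcongr
        simp only [M]
        linarith [two_mul_le_add_sq ‖P j k‖ ‖Q j k‖]
      _ = σ j * (M j k * τ k) := by ring
  calc RCLike.re (∑ j, ∑ k, ((σ j * τ k : ℝ) : 𝕜) * (P j k * Q j k))
      ≤ ∑ j, ∑ k, σ j * (M j k * τ k) := by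
        simp only [map_sum]
        exact Finset.sum_le_sum fun j _ => Finset.sum_le_sum fun k _ => hterm j k
    _ = σ ⬝ᵥ (M *ᵥ τ) := by simp only [dotProduct, mulVec, Finset.mul_sum]
    _ ≤ σ ⬝ᵥ τ := by
        refine dotProduct_mulVec_le_dotProduct_of_substochastic hσ hτ hσ0 hτ0
          (fun j k => by positivity) (fun j => ?_) (fun k => ?_)
        · simp only [M, ← Finset.sum_div, Finset.sum_add_distrib]
          linarith [hProw j, hQrow j]
        · simp only [M, ← Finset.sum_div, Finset.sum_add_distrib]
          linarith [hPcol k, hQcol k]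

end Substochastic

section InnerProductSpace

variable {ι 𝕜 E F : Type*} [RCLike 𝕜] [NormedAddCommGroup E] [InnerProductSpace 𝕜 E]
  [NormedAddCommGroup F] [InnerProductSpace 𝕜 F]

theorem sum_sq_norm_inner_le_of_orthonormal_subtype [Fintype ι] {u : ι → E} {p : ι → Prop}
    (hu : Orthonormal 𝕜 fun i : {i // p i} => u i) (h0 : ∀ i, ¬ p i → u i = 0) (x : E) :
    ∑ i, ‖⟪u i, x⟫_𝕜‖ ^ 2 ≤ ‖x‖ ^ 2 := by
  classical
  calc ∑ i, ‖⟪u i, x⟫_𝕜‖ ^ 2 = ∑ i with p i, ‖⟪u i, x⟫_𝕜‖ ^ 2 := by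
        refine (Finset.sum_filter_of_ne fun i _ hi => ?_).symm
        by_contra hp
        simp [h0 i hp] at hi
    _ = ∑ i : {i // p i}, ‖⟪u i, x⟫_𝕜‖ ^ 2 := Finset.sum_subtype _ (by simp) _
    _ ≤ ‖x‖ ^ 2 := hu.sum_inner_products_le x

theorem norm_le_one_of_orthonormal_subtype {u : ι → E} {p : ι → Prop}
    (hu : Orthonormal 𝕜 fun i : {i // p i} => u i) (h0 : ∀ i, ¬ p i → u i = 0) (i : ι) :
    ‖u i‖ ≤ 1 := by
  by_cases hi : p i
  · exact (hu.1 ⟨i, hi⟩).le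
  · simp [h0 i hi]

theorem orthonormal_inv_norm_smul {f : ι → E} (hf : Pairwise fun i j => ⟪f i, f j⟫_𝕜 = 0) :
    Orthonormal 𝕜 fun i : {i // f i ≠ 0} => (‖f i‖⁻¹ : 𝕜) • f i := by
  refine ⟨fun i => norm_smul_inv_norm i.2, fun i j hij => ?_⟩
  simp [inner_smul_left, inner_smul_right, hf (Subtype.coe_ne_coe.2 hij)]

variable [Fintype ι]

theorem inner_apply_eq_sum_inner_mul_inner (S : E →ₗ[𝕜] F) (w : OrthonormalBasis ι 𝕜 E)
    (x : F) (y : E) : ⟪x, S y⟫_𝕜 = ∑ k, ⟪x, S (w k)⟫_𝕜 * ⟪w k, y⟫_𝕜 := by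
  conv_lhs => rw [← w.sum_repr' y]
  simp [inner_sum, inner_smul_right, mul_comm]

/-- Von Neumann's trace inequality: the left side is `re (trace (T† S))`, and `v`, `w` are bases of
right singular vectors of `T`, `S` sorted by decreasing singular value. -/
theorem re_sum_inner_apply_le_sum_norm_mul_norm [LinearOrder ι] {T S : E →ₗ[𝕜] F}
    (v w : OrthonormalBasis ι 𝕜 E)
    (hTv : Pairwise fun i j => ⟪T (v i), T (v j)⟫_𝕜 = 0)
    (hSw : Pairwise fun i j => ⟪S (w i), S (w j)⟫_𝕜 = 0)
    (hTv_anti : Antitone fun i => ‖T (v i)‖) (hSw_anti : Antitone fun i => ‖S (w i)‖) :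
    RCLike.re (∑ i, ⟪T (v i), S (v i)⟫_𝕜) ≤ ∑ i, ‖T (v i)‖ * ‖S (w i)‖ := by
  have hu := orthonormal_inv_norm_smul hTv
  have hz := orthonormal_inv_norm_smul hSw
  set σ : ι → ℝ := fun j => ‖T (v j)‖
  set τ : ι → ℝ := fun k => ‖S (w k)‖
  set u : ι → F := fun j => ((σ j)⁻¹ : 𝕜) • T (v j)
  set z : ι → F := fun k => ((τ k)⁻¹ : 𝕜) • S (w k)
  have hu0 : ∀ j, ¬ T (v j) ≠ 0 → u j = 0 := fun j h => by simp [u, not_not.1 h]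
  have hz0 : ∀ k, ¬ S (w k) ≠ 0 → z k = 0 := fun k h => by simp [z, not_not.1 h]
  have hTu : ∀ j, T (v j) = (σ j : 𝕜) • u j := fun j => by
    by_cases h : T (v j) = 0
    · simp [u, h]
    · simp [u, σ, smul_smul, h]
  have hSz : ∀ k, S (w k) = (τ k : 𝕜) • z k := fun k => by
    by_cases h : S (w k) = 0
    · simp [z, h]
    · simp [z, τ, smul_smul, h]
  calc RCLike.re (∑ j, ⟪T (v j), S (v j)⟫_𝕜)
      = RCLike.re (∑ j, ∑ k, ((σ j * τ k : ℝ) : 𝕜) * (⟪u j, z k⟫_𝕜 * ⟪w k, v j⟫_𝕜)) := by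
        congr 1
        refine Finset.sum_congr rfl fun j _ => ?_
        rw [inner_apply_eq_sum_inner_mul_inner S w]
        refine Finset.sum_congr rfl fun k _ => ?_
        rw [hTu j, hSz k, inner_smul_left, inner_smul_right]
        simp only [RCLike.conj_ofReal, RCLike.ofReal_mul]
        ring
    _ ≤ ∑ j, σ j * τ j :=
        re_sum_mul_le_of_sum_sq_norm_le_one hTv_anti hSw_anti (fun j => norm_nonneg _)
          (fun k => norm_nonneg _)
          (fun j => by
            simp_rw [norm_inner_symm (u j)]
            exact (sum_sq_norm_inner_le_of_orthonormal_subtype hz hz0 (u j)).trans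
              (pow_le_one₀ (norm_nonneg _) (norm_le_one_of_orthonormal_subtype hu hu0 j)))
          (fun k => (sum_sq_norm_inner_le_of_orthonormal_subtype hu hu0 (z k)).trans
              (pow_le_one₀ (norm_nonneg _) (norm_le_one_of_orthonormal_subtype hz hz0 k)))
          (fun j => by simp [w.sum_sq_norm_inner_right])
          (fun k => by simp_rw [norm_inner_symm (w k)]; simp [v.sum_sq_norm_inner_right])

variable [FiniteDimensional 𝕜 E] [FiniteDimensional 𝕜 F]

theorem sum_inner_apply_eq_trace_adjoint_comp (T S : E →ₗ[𝕜] F) (b : OrthonormalBasis ι 𝕜 E) :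
    ∑ i, ⟪T (b i), S (b i)⟫_𝕜 = (LinearMap.adjoint T ∘ₗ S).trace 𝕜 E := by
  simp [LinearMap.trace_eq_sum_inner _ b, LinearMap.adjoint_inner_right]

theorem sum_sq_norm_apply_eq (T : E →ₗ[𝕜] F) (b b' : OrthonormalBasis ι 𝕜 E) :
    ∑ i, ‖T (b i)‖ ^ 2 = ∑ i, ‖T (b' i)‖ ^ 2 := by
  have h := congrArg RCLike.re ((sum_inner_apply_eq_trace_adjoint_comp T T b).trans
    (sum_inner_apply_eq_trace_adjoint_comp T T b').symm)
  simpa only [map_sum, inner_self_eq_norm_sq] using h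

theorem sum_sq_sub_le_sum_sq_norm_sub_apply [LinearOrder ι] {T S : E →ₗ[𝕜] F}
    (b v w : OrthonormalBasis ι 𝕜 E)
    (hTv : Pairwise fun i j => ⟪T (v i), T (v j)⟫_𝕜 = 0)
    (hSw : Pairwise fun i j => ⟪S (w i), S (w j)⟫_𝕜 = 0)
    (hTv_anti : Antitone fun i => ‖T (v i)‖) (hSw_anti : Antitone fun i => ‖S (w i)‖) :
    ∑ i, (‖T (v i)‖ - ‖S (w i)‖) ^ 2 ≤ ∑ i, ‖(T - S) (b i)‖ ^ 2 := by
  have hexpand : ∑ i, ‖(T - S) (b i)‖ ^ 2 = ∑ i, ‖T (b i)‖ ^ 2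
      - 2 * RCLike.re (∑ i, ⟪T (b i), S (b i)⟫_𝕜) + ∑ i, ‖S (b i)‖ ^ 2 := by
    simp only [LinearMap.sub_apply, @norm_sub_sq 𝕜, map_sum, Finset.sum_add_distrib,
      Finset.sum_sub_distrib, Finset.mul_sum]
  have hcross : RCLike.re (∑ i, ⟪T (b i), S (b i)⟫_𝕜) =
      RCLike.re (∑ i, ⟪T (v i), S (v i)⟫_𝕜) := by
    rw [sum_inner_apply_eq_trace_adjoint_comp T S b, sum_inner_apply_eq_trace_adjoint_comp T S v]
  have hvN := re_sum_inner_apply_le_sum_norm_mul_norm v w hTv hSw hTv_anti hSw_anti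
  have hsq : ∑ i, (‖T (v i)‖ - ‖S (w i)‖) ^ 2 = ∑ i, ‖T (v i)‖ ^ 2
      - 2 * ∑ i, ‖T (v i)‖ * ‖S (w i)‖ + ∑ i, ‖S (w i)‖ ^ 2 := by
    simp only [sub_sq, Finset.sum_add_distrib, Finset.sum_sub_distrib, Finset.mul_sum, mul_assoc]
  rw [hexpand, hsq, sum_sq_norm_apply_eq T b v, sum_sq_norm_apply_eq S b w, hcross]
  linarith

end InnerProductSpace

section Matrix

variable {m n 𝕜 : Type*} [Fintype m] [Fintype n] [DecidableEq n] [RCLike 𝕜]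

theorem toEuclideanLin_conjTranspose_mul_self_eigenvectorBasis (X : Matrix m n 𝕜) (j : n) :
    toEuclideanLin (Xᴴ * X) ((isHermitian_conjTranspose_mul_self X).eigenvectorBasis j) =
      ((isHermitian_conjTranspose_mul_self X).eigenvalues j : 𝕜) •
        (isHermitian_conjTranspose_mul_self X).eigenvectorBasis j := by
  rw [toLpLin_apply, IsHermitian.mulVec_eigenvectorBasis, RCLike.real_smul_eq_coe_smul (K := 𝕜),
    WithLp.toLp_smul, WithLp.toLp_ofLp]

theorem inner_toEuclideanLin_eigenvectorBasis (X : Matrix m n 𝕜) (i j : n) :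
    ⟪toEuclideanLin X ((isHermitian_conjTranspose_mul_self X).eigenvectorBasis i),
      toEuclideanLin X ((isHermitian_conjTranspose_mul_self X).eigenvectorBasis j)⟫_𝕜 =
    (isHermitian_conjTranspose_mul_self X).eigenvalues j *
      ⟪(isHermitian_conjTranspose_mul_self X).eigenvectorBasis i,
        (isHermitian_conjTranspose_mul_self X).eigenvectorBasis j⟫_𝕜 := by
  classical
  rw [← LinearMap.adjoint_inner_right, ← toEuclideanLin_conjTranspose_eq_adjoint,
    ← LinearMap.comp_apply, ← toLpLin_mul, toEuclideanLin_conjTranspose_mul_self_eigenvectorBasis,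
    inner_smul_right]

theorem inner_toEuclideanLin_eigenvectorBasis_of_ne (X : Matrix m n 𝕜) {i j : n} (hij : i ≠ j) :
    ⟪toEuclideanLin X ((isHermitian_conjTranspose_mul_self X).eigenvectorBasis i),
      toEuclideanLin X ((isHermitian_conjTranspose_mul_self X).eigenvectorBasis j)⟫_𝕜 = 0 := by
  rw [inner_toEuclideanLin_eigenvectorBasis,
    (isHermitian_conjTranspose_mul_self X).eigenvectorBasis.orthonormal.2 hij, mul_zero]

theorem norm_toEuclideanLin_eigenvectorBasis (X : Matrix m n 𝕜) (j : n) :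
    ‖toEuclideanLin X ((isHermitian_conjTranspose_mul_self X).eigenvectorBasis j)‖ =
      √((isHermitian_conjTranspose_mul_self X).eigenvalues j) := by
  have h := congrArg RCLike.re (inner_toEuclideanLin_eigenvectorBasis X j j)
  rw [inner_self_eq_norm_sq, inner_self_eq_norm_sq_to_K,
    (isHermitian_conjTranspose_mul_self X).eigenvectorBasis.norm_eq_one] at h
  simp only [RCLike.ofReal_one, one_pow, mul_one, RCLike.ofReal_re] at h
  rw [← h, Real.sqrt_sq (norm_nonneg _)]

theorem sum_sq_norm_toEuclideanLin_basisFun (X : Matrix m n 𝕜) :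
    ∑ j, ‖toEuclideanLin X (EuclideanSpace.basisFun n 𝕜 j)‖ ^ 2 = ∑ i, ∑ j, ‖X i j‖ ^ 2 := by
  simp only [EuclideanSpace.norm_sq_eq]
  rw [Finset.sum_comm]
  simp [toLpLin_apply, mulVec_single]

end Matrix

/-- **Mirsky's inequality.** If `σX` and `σY` are the singular values of `X` and `Y` in
nonincreasing order, then the ℓ²-distance of the singular value vectors is bounded by the
Frobenius norm of `X - Y`. -/
theorem mirsky_singular_value_perturbation
    (m n : ℕ) (X Y : Matrix (Fin m) (Fin n) ℂ)
    (σX σY : Fin n → ℝ)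
    (hXanti : Antitone σX) (hYanti : Antitone σY)
    (hX : ∃ e : Equiv.Perm (Fin n), ∀ j, σX j = singValsUnordered X (e j))
    (hY : ∃ e : Equiv.Perm (Fin n), ∀ j, σY j = singValsUnordered Y (e j)) :
    Real.sqrt (∑ i : Fin (min m n),
        |σX (Fin.castLE (min_le_right m n) i) - σY (Fin.castLE (min_le_right m n) i)| ^ 2)
      ≤ Real.sqrt (∑ i : Fin m, ∑ j : Fin n, ‖X i j - Y i j‖ ^ 2) := by
  obtain ⟨e, he⟩ := hX
  obtain ⟨f, hf⟩ := hY
  let v := (isHermitian_conjTranspose_mul_self X).eigenvectorBasis.reindex e.symm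
  let w := (isHermitian_conjTranspose_mul_self Y).eigenvectorBasis.reindex f.symm
  have hv : ∀ j, ‖toEuclideanLin X (v j)‖ = σX j := fun j => by
    simp [v, he, norm_toEuclideanLin_eigenvectorBasis, singValsUnordered]
  have hw : ∀ j, ‖toEuclideanLin Y (w j)‖ = σY j := fun j => by
    simp [w, hf, norm_toEuclideanLin_eigenvectorBasis, singValsUnordered]
  have hvw := sum_sq_sub_le_sum_sq_norm_sub_apply (T := toEuclideanLin X) (S := toEuclideanLin Y)
    (EuclideanSpace.basisFun (Fin n) ℂ) v w
    (fun i j hij => by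
      simpa [v] using inner_toEuclideanLin_eigenvectorBasis_of_ne X (e.injective.ne hij))
    (fun i j hij => by
      simpa [w] using inner_toEuclideanLin_eigenvectorBasis_of_ne Y (f.injective.ne hij))
    (by simpa only [hv] using hXanti) (by simpa only [hw] using hYanti)
  simp only [hv, hw, ← map_sub, sum_sq_norm_toEuclideanLin_basisFun, Matrix.sub_apply] at hvw
  refine Real.sqrt_le_sqrt (le_trans ?_ hvw)
  simp only [sq_abs]
  exact (sum_map univ (Fin.castLEEmb (min_le_right m n)) fun j => (σX j - σY j) ^ 2).symm.le.trans
    (sum_le_univ_sum_of_nonneg fun _ => sq_nonneg _)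
end

section
/- Let σ = (σ_k)_{k≥1} be a nonincreasing nonnegative real sequence satisfying σ_k ≤ C e^{−c k^β} for all k ≥ 1, with constants C, c, β > 0. Then for all α with 0 < α < C one has r_α(σ) ≤ (c^{−1} ln(C α^{−1}))^{1/β}, and there exists a constant K > 0 depending only on C, c, β such that for all α ∈ (0, 1], τ_α(σ) ≤ K (1 + |ln α|)^{1/(2β)} α. -/
/-- `r_δ(σ)`: the number of entries of `σ` exceeding `δ`. -/
noncomputable def rCount (σ : ℕ → ℝ) (δ : ℝ) : ℕ := {k : ℕ | δ < σ k}.ncard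

/-- `τ_δ(σ)`: the ℓ²-norm of the tail of `σ` after the first `r_δ(σ)` entries. -/
noncomputable def tauTail (σ : ℕ → ℝ) (δ : ℝ) : ℝ :=
  Real.sqrt (∑' k : ℕ, if rCount σ δ ≤ k then σ k ^ 2 else 0)

/-!
Inverting the decay bound, `α < σ k ≤ C e^{-c (k+1)^β}` forces `(k+1)^β < c⁻¹ log (C/α)`, which
bounds `r_α`. For the tail, every `σ k` with `k ≥ r_α` is at most `α` (monotonicity), and beyond the
cut-off `N = ⌈(2 c⁻¹ log⁺ (C/α))^{1/β}⌉` the decay bound gives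
`σ_k² ≤ C² e^{-2c(k+1)^β} ≤ α² e^{-c(k+1)^β}`. Hence `τ_α² ≤ α² (N + ∑ₖ e^{-c(k+1)^β})`, and
`N = O((1 + |log α|)^{1/β})`.
-/

open Real Filter

lemma summable_exp_neg_mul_add_one_rpow {c β : ℝ} (hc : 0 < c) (hβ : 0 < β) :
    Summable fun k : ℕ ↦ exp (-c * ((k : ℝ) + 1) ^ β) := by
  have hpow : Tendsto (fun k : ℕ ↦ ((k : ℝ) + 1) ^ β) atTop atTop :=
    (tendsto_rpow_atTop hβ).comp (tendsto_atTop_add_const_right _ 1 tendsto_natCast_atTop_atTop)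
  have hlittleO := (isLittleO_exp_neg_mul_rpow_atTop hc (-2 / β)).comp_tendsto hpow
  refine summable_of_isBigO_nat (g := fun k : ℕ ↦ ((k : ℝ) + 1) ^ (-2 : ℝ)) ?_
    (hlittleO.isBigO.congr_right fun k ↦ ?_)
  · exact (summable_nat_add_iff 1).mpr ((summable_nat_rpow (p := -2)).mpr (by norm_num))
      |>.congr fun k ↦ by push_cast; rfl
  · rw [Function.comp_apply, ← rpow_mul (by positivity), mul_div_cancel₀ _ hβ.ne']

lemma lt_inv_mul_log_of_lt_mul_exp {α C c y : ℝ} (hα : 0 < α) (hc : 0 < c)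
    (h : α < C * exp (-c * y)) : y < c⁻¹ * log (C * α⁻¹) := by
  have hC : 0 < C := pos_of_mul_pos_left (hα.trans h) (exp_pos _).le
  rw [lt_inv_mul_iff₀ hc, lt_log_iff_exp_lt (by positivity), lt_mul_inv_iff₀ hα, mul_comm,
    ← lt_div_iff₀ (exp_pos _), div_eq_mul_inv, ← exp_neg]
  rwa [neg_mul] at h

lemma sq_mul_exp_le_sq {α C c y : ℝ} (hα : 0 < α) (hc : 0 < c)
    (hy : c⁻¹ * (2 * log⁺ (C * α⁻¹)) ≤ y) : C ^ 2 * exp (-c * y) ≤ α ^ 2 := by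
  by_contra! hlt
  have hlog : log (C ^ 2 * (α ^ 2)⁻¹) = 2 * log (C * α⁻¹) := by
    rw [← inv_pow, ← mul_pow, log_pow, Nat.cast_ofNat]
  have hy' := lt_inv_mul_log_of_lt_mul_exp (by positivity) hc hlt
  rw [hlog] at hy'
  have hlog_le : c⁻¹ * (2 * log (C * α⁻¹)) ≤ c⁻¹ * (2 * log⁺ (C * α⁻¹)) := by
    gcongr
    exact le_max_right _ _
  linarith

lemma posLog_mul_inv_le (C α : ℝ) : log⁺ (C * α⁻¹) ≤ (1 + log⁺ C) * (1 + |log α|) := by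
  have hinv : log⁺ α⁻¹ ≤ |log α| := by
    rw [posLog_apply, log_inv, ← abs_neg]
    exact max_le (abs_nonneg _) (le_abs_self _)
  nlinarith [posLog_mul (x := C) (y := α⁻¹), posLog_nonneg (x := C), abs_nonneg (log α)]

lemma le_of_rCount_le {σ : ℕ → ℝ} {α : ℝ} (hσ : Antitone σ) (hfin : {k | α < σ k}.Finite) {k : ℕ}
    (hk : rCount σ α ≤ k) : σ k ≤ α := by
  by_contra! hlt
  have hsub : (Finset.range (k + 1) : Set ℕ) ⊆ {j | α < σ j} := fun j hj ↦
    hlt.trans_le (hσ (Nat.lt_succ_iff.mp (Finset.mem_range.mp hj)))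
  have hcard := Set.ncard_le_ncard hsub hfin
  rw [Set.ncard_coe_finset, Finset.card_range] at hcard
  have : k + 1 ≤ rCount σ α := hcard
  omega

lemma tsum_le_head_add_tail {f b : ℕ → ℝ} {a : ℝ} (N : ℕ) (hf : ∀ k, 0 ≤ f k) (hb : Summable b)
    (hb0 : ∀ k, 0 ≤ b k) (hhead : ∀ k < N, f k ≤ a) (htail : ∀ k, N ≤ k → f k ≤ b k) :
    ∑' k, f k ≤ N * a + ∑' k, b k := by
  have hbN : Summable fun k ↦ b (k + N) := (summable_nat_add_iff N).mpr hb
  have hfN : Summable fun k ↦ f (k + N) :=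
    hbN.of_nonneg_of_le (fun k ↦ hf _) fun k ↦ htail _ (Nat.le_add_left N k)
  rw [← ((summable_nat_add_iff N).mp hfN).sum_add_tsum_nat_add N]
  refine add_le_add ?_ ?_
  · simpa using Finset.sum_le_card_nsmul _ _ a fun k hk ↦ hhead k (Finset.mem_range.mp hk)
  · calc ∑' k, f (k + N) ≤ ∑' k, b (k + N) :=
          hfN.tsum_le_tsum (fun k ↦ htail _ (Nat.le_add_left N k)) hbN
      _ ≤ ∑' k, b k := tsum_comp_le_tsum_of_inj hb hb0 (add_left_injective N)

section ExpDecay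

variable {σ : ℕ → ℝ} {C c β α : ℝ}

lemma setOf_lt_subset_range_floor (hc : 0 < c) (hβ : 0 < β) (hα : 0 < α)
    (hbd : ∀ k : ℕ, σ k ≤ C * exp (-c * ((k : ℝ) + 1) ^ β)) :
    {k | α < σ k} ⊆ Finset.range ⌊(c⁻¹ * log (C * α⁻¹)) ^ (1 / β)⌋₊ := by
  intro k hk
  have hlt := lt_inv_mul_log_of_lt_mul_exp hα hc (hk.trans_le (hbd k))
  have hpow : 0 ≤ ((k : ℝ) + 1) ^ β := by positivity
  have hk1 : (k : ℝ) + 1 < (c⁻¹ * log (C * α⁻¹)) ^ (1 / β) := by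
    rwa [one_div, lt_rpow_inv_iff_of_pos (by positivity) (hpow.trans hlt.le) hβ]
  rw [Finset.coe_range, Set.mem_Iio, ← Nat.add_one_le_iff]
  exact Nat.le_floor (by exact_mod_cast hk1.le)

lemma rCount_le_of_exp_decay (hc : 0 < c) (hβ : 0 < β) (hα : 0 < α) (hαC : α < C)
    (hbd : ∀ k : ℕ, σ k ≤ C * exp (-c * ((k : ℝ) + 1) ^ β)) :
    (rCount σ α : ℝ) ≤ (c⁻¹ * log (C * α⁻¹)) ^ (1 / β) := by
  have hlog : 0 ≤ log (C * α⁻¹) :=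
    log_nonneg ((one_le_div hα).mpr hαC.le |>.trans_eq (div_eq_mul_inv C α))
  have hcard :=
    Set.ncard_le_ncard (setOf_lt_subset_range_floor hc hβ hα hbd) (Finset.finite_toSet _)
  rw [Set.ncard_coe_finset, Finset.card_range] at hcard
  exact (Nat.cast_le.mpr hcard).trans (Nat.floor_le (by positivity))

lemma tauTail_le_of_cutoff (hσ : Antitone σ) (hσ0 : ∀ k, 0 ≤ σ k)
    (hbd : ∀ k : ℕ, σ k ≤ C * exp (-c * ((k : ℝ) + 1) ^ β)) (hc : 0 < c) (hβ : 0 < β)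
    (hα : 0 < α) (N : ℕ) (hN : ∀ k, N ≤ k → C ^ 2 * exp (-c * ((k : ℝ) + 1) ^ β) ≤ α ^ 2) :
    tauTail σ α ≤ α * √(N + ∑' k : ℕ, exp (-c * ((k : ℝ) + 1) ^ β)) := by
  have hfin : {k | α < σ k}.Finite :=
    (Finset.finite_toSet _).subset (setOf_lt_subset_range_floor hc hβ hα hbd)
  have hsum := tsum_le_head_add_tail N (a := α ^ 2)
    (f := fun k ↦ if rCount σ α ≤ k then σ k ^ 2 else 0)
    (b := fun k ↦ α ^ 2 * exp (-c * ((k : ℝ) + 1) ^ β))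
    (fun k ↦ by split_ifs <;> positivity)
    ((summable_exp_neg_mul_add_one_rpow hc hβ).mul_left _) (fun k ↦ by positivity)
    (fun k _ ↦ by
      split_ifs with hk
      · exact pow_le_pow_left₀ (hσ0 k) (le_of_rCount_le hσ hfin hk) 2
      · positivity)
    (fun k hk ↦ by
      split_ifs
      · calc σ k ^ 2 ≤ (C * exp (-c * ((k : ℝ) + 1) ^ β)) ^ 2 := pow_le_pow_left₀ (hσ0 k) (hbd k) 2
          _ = C ^ 2 * exp (-c * ((k : ℝ) + 1) ^ β) * exp (-c * ((k : ℝ) + 1) ^ β) := by ring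
          _ ≤ α ^ 2 * exp (-c * ((k : ℝ) + 1) ^ β) := by gcongr; exact hN k hk
      · positivity)
  rw [tsum_mul_left, mul_comm (N : ℝ), ← mul_add] at hsum
  calc tauTail σ α ≤ √(α ^ 2 * (N + ∑' k : ℕ, exp (-c * ((k : ℝ) + 1) ^ β))) := sqrt_le_sqrt hsum
    _ = α * √(N + ∑' k : ℕ, exp (-c * ((k : ℝ) + 1) ^ β)) := by
      rw [sqrt_mul (sq_nonneg α), sqrt_sq hα.le]

lemma tauTail_le_of_exp_decay (hσ : Antitone σ) (hσ0 : ∀ k, 0 ≤ σ k)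
    (hbd : ∀ k : ℕ, σ k ≤ C * exp (-c * ((k : ℝ) + 1) ^ β)) (hc : 0 < c) (hβ : 0 < β)
    (hα : 0 < α) :
    tauTail σ α ≤ √((c⁻¹ * (2 * (1 + log⁺ C))) ^ (1 / β) + 1 +
        ∑' k : ℕ, exp (-c * ((k : ℝ) + 1) ^ β)) * (1 + |log α|) ^ (1 / (2 * β)) * α := by
  set S := ∑' k : ℕ, exp (-c * ((k : ℝ) + 1) ^ β)
  set A := (c⁻¹ * (2 * (1 + log⁺ C))) ^ (1 / β)
  set P := (1 + |log α|) ^ (1 / β)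
  set T := (c⁻¹ * (2 * log⁺ (C * α⁻¹))) ^ (1 / β)
  have hS : 0 ≤ S := tsum_nonneg fun k ↦ (exp_pos _).le
  have hlogC : 0 ≤ log⁺ C := posLog_nonneg
  have hlogCα : 0 ≤ log⁺ (C * α⁻¹) := posLog_nonneg
  have hA : 0 ≤ A := rpow_nonneg (by positivity) _
  have hP : 1 ≤ P := one_le_rpow (by linarith [abs_nonneg (log α)]) (by positivity)
  have hT : 0 ≤ T := rpow_nonneg (by positivity) _
  have hcut : ∀ k, ⌈T⌉₊ ≤ k → C ^ 2 * exp (-c * ((k : ℝ) + 1) ^ β) ≤ α ^ 2 := fun k hk ↦ by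
    have hTk : T ≤ k + 1 := calc
      T ≤ ⌈T⌉₊ := Nat.le_ceil T
      _ ≤ k := by exact_mod_cast hk
      _ ≤ k + 1 := by linarith
    refine sq_mul_exp_le_sq hα hc
      ((rpow_inv_le_iff_of_pos (by positivity) (by positivity) hβ).mp ?_)
    rwa [← one_div β]
  have hTAP : T ≤ A * P := by
    rw [← mul_rpow (by positivity) (by positivity)]
    refine rpow_le_rpow (by positivity) ?_ (by positivity)
    calc c⁻¹ * (2 * log⁺ (C * α⁻¹)) ≤ c⁻¹ * (2 * ((1 + log⁺ C) * (1 + |log α|))) := by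
          gcongr; exact posLog_mul_inv_le C α
      _ = c⁻¹ * (2 * (1 + log⁺ C)) * (1 + |log α|) := by ring
  have hNS : (⌈T⌉₊ : ℝ) + S ≤ (A + 1 + S) * P := by
    have := Nat.ceil_lt_add_one hT
    nlinarith
  calc tauTail σ α ≤ α * √(⌈T⌉₊ + S) := tauTail_le_of_cutoff hσ hσ0 hbd hc hβ hα _ hcut
    _ ≤ α * √((A + 1 + S) * P) := by gcongr
    _ = √(A + 1 + S) * (1 + |log α|) ^ (1 / (2 * β)) * α := by
      rw [sqrt_mul (by positivity), sqrt_eq_rpow P, ← rpow_mul (by positivity)]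
      ring_nf

end ExpDecay

theorem exp_decay_threshold_bounds_general (C c β : ℝ) (hc : 0 < c) (hβ : 0 < β) :
    (∀ (σ : ℕ → ℝ), Antitone σ → (∀ k, 0 ≤ σ k) →
        (∀ k : ℕ, σ k ≤ C * Real.exp (-c * ((k : ℝ) + 1) ^ β)) →
        ∀ α : ℝ, 0 < α → α < C →
          (rCount σ α : ℝ) ≤ (c⁻¹ * Real.log (C * α⁻¹)) ^ (1/β))
    ∧ ∃ K : ℝ, 0 < K ∧
        ∀ (σ : ℕ → ℝ), Antitone σ → (∀ k, 0 ≤ σ k) →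
          (∀ k : ℕ, σ k ≤ C * Real.exp (-c * ((k : ℝ) + 1) ^ β)) →
          ∀ α : ℝ, 0 < α → α ≤ 1 →
            tauTail σ α ≤ K * (1 + |Real.log α|) ^ (1/(2*β)) * α := by
  refine ⟨fun σ _ _ hbd α hα hαC ↦ rCount_le_of_exp_decay hc hβ hα hαC hbd,
    √((c⁻¹ * (2 * (1 + log⁺ C))) ^ (1 / β) + 1 + ∑' k : ℕ, exp (-c * ((k : ℝ) + 1) ^ β)),
    sqrt_pos.mpr ?_, fun σ hσ hσ0 hbd α hα _ ↦ tauTail_le_of_exp_decay hσ hσ0 hbd hc hβ hα⟩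
  have : 0 ≤ ∑' k : ℕ, exp (-c * ((k : ℝ) + 1) ^ β) := tsum_nonneg fun k ↦ (exp_pos _).le
  have : 0 ≤ log⁺ C := posLog_nonneg
  positivity

/-- **Threshold bounds under exponential-type decay.** If the nonincreasing nonnegative
sequence `σ` satisfies `σ_k ≤ C e^{-c k^β}` for `k ≥ 1` (written 0-indexed below), then for
`0 < α < C` one has `r_α(σ) ≤ (c⁻¹ ln(C α⁻¹))^{1/β}`, and there is a constant `K > 0`
depending only on `C, c, β` such that for all `α ∈ (0,1]`,
`τ_α(σ) ≤ K (1 + |ln α|)^{1/(2β)} α`. -/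
theorem exp_decay_threshold_bounds (C c β : ℝ) (hC : 0 < C) (hc : 0 < c) (hβ : 0 < β) :
    (∀ (σ : ℕ → ℝ), Antitone σ → (∀ k, 0 ≤ σ k) →
        (∀ k : ℕ, σ k ≤ C * Real.exp (-c * ((k : ℝ) + 1) ^ β)) →
        ∀ α : ℝ, 0 < α → α < C →
          (rCount σ α : ℝ) ≤ (c⁻¹ * Real.log (C * α⁻¹)) ^ (1/β))
    ∧ ∃ K : ℝ, 0 < K ∧
        ∀ (σ : ℕ → ℝ), Antitone σ → (∀ k, 0 ≤ σ k) →
          (∀ k : ℕ, σ k ≤ C * Real.exp (-c * ((k : ℝ) + 1) ^ β)) →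
          ∀ α : ℝ, 0 < α → α ≤ 1 →
            tauTail σ α ≤ K * (1 + |Real.log α|) ^ (1/(2*β)) * α :=
  exp_decay_threshold_bounds_general C c β hc hβ
end

section
/- Let H be a real Hilbert space, F : H → H a contraction with factor ρ ∈ (0,1) (i.e., ‖F(v) − F(w)‖ ≤ ρ‖v − w‖ for all v, w ∈ H) with fixed point u*, and S : H → H non-expansive (i.e., ‖S(v) − S(w)‖ ≤ ‖v − w‖ for all v, w). Then there exists a unique u^S ∈ H with u^S = S(F(u^S)), this point satisfies (1 + ρ)^{−1} ‖S(u*) − u*‖ ≤ ‖u^S − u*‖ ≤ (1 − ρ)^{−1} ‖S(u*) − u*‖, and for any u_0 ∈ H the iterates u_{k+1} := S(F(u_k)) satisfy ‖u_k − u^S‖ ≤ ρ^k ‖u_0 − u^S‖ for all k ≥ 0. -/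
/-!
The map `T = S ∘ F` is a `ρ`-contraction, so Banach's fixed-point theorem gives the unique fixed
point `u^S` and the geometric convergence of the iterates. Since `T u* = S u*`, the triangle
inequality through `T u^S = u^S` compares `‖S u* - u*‖ = ‖T u* - u*‖` with `‖u^S - u*‖` in both
directions, with constants `1 + ρ` and `1 - ρ`.
-/

open Function

theorem LipschitzWith.dist_apply_le_of_isFixedPt {α : Type*} [PseudoMetricSpace α] {K : NNReal}
    {f : α → α} (hf : LipschitzWith K f) {y : α} (hy : IsFixedPt f y) (x : α) :
    dist (f x) x ≤ (1 + K) * dist y x :=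
  calc dist (f x) x ≤ dist (f x) y + dist y x := dist_triangle _ _ _
    _ = dist (f x) (f y) + dist y x := by rw [hy.eq]
    _ ≤ K * dist x y + dist y x := by gcongr; exact hf.dist_le_mul x y
    _ = (1 + K) * dist y x := by rw [dist_comm x y]; ring

theorem ContractingWith.dist_fixedPoint_iterate_le {α : Type*} [MetricSpace α] [Nonempty α]
    [CompleteSpace α] {K : NNReal} {f : α → α} (hf : ContractingWith K f) (x : α) (k : ℕ) :
    dist (f^[k] x) (fixedPoint f hf) ≤ K ^ k * dist x (fixedPoint f hf) := by
  simpa only [(hf.fixedPoint_isFixedPt.iterate k).eq, NNReal.coe_pow]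
    using (hf.toLipschitzWith.iterate k).dist_le_mul x (fixedPoint f hf)

theorem contractingWith_of_norm_sub_le {E : Type*} [NormedAddCommGroup E] {f : E → E} {ρ : ℝ}
    (hρ0 : 0 ≤ ρ) (hρ1 : ρ < 1) (hf : ∀ v w, ‖f v - f w‖ ≤ ρ * ‖v - w‖) :
    ContractingWith ⟨ρ, hρ0⟩ f :=
  ⟨hρ1, lipschitzWith_iff_norm_sub_le.2 hf⟩

theorem softThresholded_fixed_point_general
    {H : Type*} [NormedAddCommGroup H] [CompleteSpace H]
    (F : H → H) (ρ : ℝ) (hρ0 : 0 < ρ) (hρ1 : ρ < 1)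
    (hF : ∀ v w : H, ‖F v - F w‖ ≤ ρ * ‖v - w‖)
    (ustar : H) (hfix : F ustar = ustar)
    (S : H → H) (hS : ∀ v w : H, ‖S v - S w‖ ≤ ‖v - w‖) :
    ∃ uS : H,
      uS = S (F uS)
      ∧ (∀ w : H, w = S (F w) → w = uS)
      ∧ (1 + ρ)⁻¹ * ‖S ustar - ustar‖ ≤ ‖uS - ustar‖
      ∧ ‖uS - ustar‖ ≤ (1 - ρ)⁻¹ * ‖S ustar - ustar‖
      ∧ ∀ (u0 : H) (k : ℕ), ‖(fun v => S (F v))^[k] u0 - uS‖ ≤ ρ ^ k * ‖u0 - uS‖ := by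
  set T : H → H := fun v => S (F v)
  have hT : ContractingWith ⟨ρ, hρ0.le⟩ T :=
    contractingWith_of_norm_sub_le hρ0.le hρ1 fun v w => (hS _ _).trans (hF v w)
  have hTstar : T ustar = S ustar := congrArg S hfix
  have hfixed := hT.fixedPoint_isFixedPt
  refine ⟨hT.fixedPoint T, hfixed.symm, fun w hw => hT.fixedPoint_unique hw.symm, ?_, ?_,
    fun u0 k => ?_⟩
  · have hlower := hT.toLipschitzWith.dist_apply_le_of_isFixedPt hfixed ustar
    rw [hTstar, dist_eq_norm, dist_eq_norm] at hlower
    rwa [inv_mul_le_iff₀ (by positivity)]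
  · have hupper := hT.dist_fixedPoint_le ustar
    rw [hTstar, dist_comm, dist_eq_norm, dist_comm, dist_eq_norm] at hupper
    rwa [inv_mul_eq_div]
  · have hiter := hT.dist_fixedPoint_iterate_le u0 k
    rwa [dist_eq_norm, dist_eq_norm] at hiter

/-- **Thresholded fixed-point iteration (Lemma on `u^S`).** If `F` is a `ρ`-contraction with
fixed point `u*` and `S` is non-expansive, then `S ∘ F` has a unique fixed point `u^S`,
satisfying `(1+ρ)⁻¹‖S u* - u*‖ ≤ ‖u^S - u*‖ ≤ (1-ρ)⁻¹‖S u* - u*‖`, and the iterates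
`u_{k+1} = S(F(u_k))` converge to `u^S` at rate `ρ`. -/
theorem softThresholded_fixed_point
    {H : Type*} [NormedAddCommGroup H] [InnerProductSpace ℝ H] [CompleteSpace H]
    (F : H → H) (ρ : ℝ) (hρ0 : 0 < ρ) (hρ1 : ρ < 1)
    (hF : ∀ v w : H, ‖F v - F w‖ ≤ ρ * ‖v - w‖)
    (ustar : H) (hfix : F ustar = ustar)
    (S : H → H) (hS : ∀ v w : H, ‖S v - S w‖ ≤ ‖v - w‖) :
    ∃ uS : H,
      uS = S (F uS)
      ∧ (∀ w : H, w = S (F w) → w = uS)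
      ∧ (1 + ρ)⁻¹ * ‖S ustar - ustar‖ ≤ ‖uS - ustar‖
      ∧ ‖uS - ustar‖ ≤ (1 - ρ)⁻¹ * ‖S ustar - ustar‖
      ∧ ∀ (u0 : H) (k : ℕ), ‖(fun v => S (F v))^[k] u0 - uS‖ ≤ ρ ^ k * ‖u0 - uS‖ :=
  softThresholded_fixed_point_general F ρ hρ0 hρ1 hF ustar hfix S hS
end

section
/- Let H be a real Hilbert space, F : H → H a contraction with factor ρ ∈ (0,1) with fixed point u*, and (S_α)_{α>0} a family of non-expansive self-maps of H. Let p ∈ (0,2) and M ≥ 0 be such that ‖S_α(u*) − u*‖ ≤ M α^{1−p/2} for all α > 0. Fix c_0 > 0 and set α_k := (ρ^{k+1} c_0)^{2/(2−p)} for k ≥ 0. Then the iteration u_0 := 0, u_{k+1} := S_{α_k}(F(u_k)) satisfies for all k ≥ 0: ‖u_k − u*‖ ≤ (‖u*‖ + ((1+ρ)/(1−ρ)) c_0 M k) ρ^k. -/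
/-!
Since `F` contracts towards `u*` and `S_α` is non-expansive, each step obeys
`e_{k+1} ≤ ρ e_k + ‖S_{α_k} u* - u*‖ ≤ ρ e_k + M c₀ ρ^{k+1}` for `e_k = ‖u_k - u*‖`, because
`α_k^{1-p/2} = ρ^{k+1} c₀`. Unrolling this recursion gives `e_k ≤ (e_0 + M c₀ k) ρ^k`, and
`(1+ρ)/(1-ρ) ≥ 1`.
-/

theorem norm_nonexpansive_comp_sub_fixedPoint_le {E : Type*} [SeminormedAddCommGroup E]
    {F T : E → E} {ρ : ℝ} (hF : ∀ v w, ‖F v - F w‖ ≤ ρ * ‖v - w‖)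
    (hT : ∀ v w, ‖T v - T w‖ ≤ ‖v - w‖) {x : E} (hx : F x = x) (v : E) :
    ‖T (F v) - x‖ ≤ ρ * ‖v - x‖ + ‖T x - x‖ :=
  calc ‖T (F v) - x‖ ≤ ‖T (F v) - T x‖ + ‖T x - x‖ := norm_sub_le_norm_sub_add_norm_sub _ _ _
    _ ≤ ‖F v - x‖ + ‖T x - x‖ := by gcongr; exact hT _ _
    _ = ‖F v - F x‖ + ‖T x - x‖ := by rw [hx]
    _ ≤ ρ * ‖v - x‖ + ‖T x - x‖ := by gcongr; exact hF v x

theorem le_add_mul_mul_pow_of_le_mul_add_mul_pow {e : ℕ → ℝ} {ρ C : ℝ} (hρ : 0 ≤ ρ)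
    (he : ∀ k, e (k + 1) ≤ ρ * e k + C * ρ ^ (k + 1)) (k : ℕ) :
    e k ≤ (e 0 + C * k) * ρ ^ k := by
  induction k with
  | zero => simp
  | succ k ih =>
    calc e (k + 1) ≤ ρ * e k + C * ρ ^ (k + 1) := he k
      _ ≤ ρ * ((e 0 + C * k) * ρ ^ k) + C * ρ ^ (k + 1) := by gcongr
      _ = (e 0 + C * (k + 1 : ℕ)) * ρ ^ (k + 1) := by push_cast; ring

theorem apriori_iteration_wlp_general
    {H : Type*} [NormedAddCommGroup H]
    (F : H → H) (ρ : ℝ) (hρ0 : 0 < ρ) (hρ1 : ρ < 1)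
    (hF : ∀ v w : H, ‖F v - F w‖ ≤ ρ * ‖v - w‖)
    (ustar : H) (hfix : F ustar = ustar)
    (S : ℝ → H → H)
    (hS : ∀ α : ℝ, 0 < α → ∀ v w : H, ‖S α v - S α w‖ ≤ ‖v - w‖)
    (p : ℝ) (hp2 : p < 2)
    (M : ℝ) (hM : 0 ≤ M)
    (happrox : ∀ α : ℝ, 0 < α → ‖S α ustar - ustar‖ ≤ M * α ^ (1 - p/2))
    (c0 : ℝ) (hc0 : 0 < c0)
    (u : ℕ → H) (hu0 : u 0 = 0)
    (hrec : ∀ k : ℕ, u (k + 1) = S ((ρ ^ (k + 1) * c0) ^ (2 / (2 - p))) (F (u k))) :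
    ∀ k : ℕ, ‖u k - ustar‖ ≤ (‖ustar‖ + ((1 + ρ) / (1 - ρ)) * c0 * M * k) * ρ ^ k := by
  have hstep (k : ℕ) : ‖u (k + 1) - ustar‖ ≤ ρ * ‖u k - ustar‖ + M * c0 * ρ ^ (k + 1) := by
    have hx : 0 < ρ ^ (k + 1) * c0 := by positivity
    have hα : 0 < (ρ ^ (k + 1) * c0) ^ (2 / (2 - p)) := by positivity
    have hexp : 2 / (2 - p) = (1 - p / 2)⁻¹ := by field_simp
    rw [hrec k]
    calc _ ≤ ρ * ‖u k - ustar‖ + ‖S _ ustar - ustar‖ :=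
          norm_nonexpansive_comp_sub_fixedPoint_le hF (hS _ hα) hfix _
      _ ≤ ρ * ‖u k - ustar‖ + M * (ρ ^ (k + 1) * c0) := by
          grw [happrox _ hα, hexp, Real.rpow_inv_rpow hx.le (by linarith)]
      _ = ρ * ‖u k - ustar‖ + M * c0 * ρ ^ (k + 1) := by ring
  have hfactor : 1 ≤ (1 + ρ) / (1 - ρ) := by rw [one_le_div (by linarith)]; linarith
  intro k
  calc ‖u k - ustar‖ ≤ (‖u 0 - ustar‖ + M * c0 * k) * ρ ^ k :=
        le_add_mul_mul_pow_of_le_mul_add_mul_pow (e := fun k ↦ ‖u k - ustar‖) hρ0.le hstep k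
    _ = (‖ustar‖ + 1 * c0 * M * k) * ρ ^ k := by rw [hu0, zero_sub, norm_neg]; ring
    _ ≤ _ := by gcongr

/-- **A priori parameter choice, algebraic decay, rate `ρ`.** With `α_k = (ρ^{k+1} c₀)^{2/(2-p)}`
and thresholding error `‖S_α u* - u*‖ ≤ M α^{1-p/2}`, the iterates `u_{k+1} = S_{α_k}(F u_k)`,
`u_0 = 0`, satisfy `‖u_k - u*‖ ≤ (‖u*‖ + ((1+ρ)/(1-ρ)) c₀ M k) ρ^k`. -/
theorem apriori_iteration_wlp
    {H : Type*} [NormedAddCommGroup H] [InnerProductSpace ℝ H] [CompleteSpace H]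
    (F : H → H) (ρ : ℝ) (hρ0 : 0 < ρ) (hρ1 : ρ < 1)
    (hF : ∀ v w : H, ‖F v - F w‖ ≤ ρ * ‖v - w‖)
    (ustar : H) (hfix : F ustar = ustar)
    (S : ℝ → H → H)
    (hS : ∀ α : ℝ, 0 < α → ∀ v w : H, ‖S α v - S α w‖ ≤ ‖v - w‖)
    (p : ℝ) (hp0 : 0 < p) (hp2 : p < 2)
    (M : ℝ) (hM : 0 ≤ M)
    (happrox : ∀ α : ℝ, 0 < α → ‖S α ustar - ustar‖ ≤ M * α ^ (1 - p/2))
    (c0 : ℝ) (hc0 : 0 < c0)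
    (u : ℕ → H) (hu0 : u 0 = 0)
    (hrec : ∀ k : ℕ, u (k + 1) = S ((ρ ^ (k + 1) * c0) ^ (2 / (2 - p))) (F (u k))) :
    ∀ k : ℕ, ‖u k - ustar‖ ≤ (‖ustar‖ + ((1 + ρ) / (1 - ρ)) * c0 * M * k) * ρ ^ k :=
  apriori_iteration_wlp_general F ρ hρ0 hρ1 hF ustar hfix S hS p hp2 M hM happrox c0 hc0 u hu0 hrec
end

section
/- Let H be a real Hilbert space, F : H → H a contraction with factor ρ ∈ (0,1) with fixed point u*, and (S_α)_{α>0} a family of non-expansive self-maps of H. Let p ∈ (0,2) and M ≥ 0 be such that ‖S_α(u*) − u*‖ ≤ M α^{1−p/2} for all α > 0. Fix c_0 > 0, ρ̃ ∈ (ρ, 1), and set α_k := (ρ̃^{k+1} c_0)^{2/(2−p)} for k ≥ 0. Then the iteration u_0 := 0, u_{k+1} := S_{α_k}(F(u_k)) satisfies for all k ≥ 0: ‖u_k − u*‖ ≤ (‖u*‖ + ((1+ρ)/(1−ρ)) c_0 M ρ̃/(ρ̃ − ρ)) ρ̃^k. -/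
/-!
The error `eₖ = ‖uₖ - u*‖` obeys `eₖ₊₁ ≤ ρ eₖ + M αₖ^{1-p/2}`: non-expansiveness of `S_α` and the
contraction property of `F` give the factor `ρ`, and the approximation error of `S_{αₖ}` at `u*`
gives the perturbation. The choice of `αₖ` makes `αₖ^{1-p/2} = c₀ ρ̃^{k+1}`, a geometric
perturbation of ratio `ρ̃ > ρ`, and the constant is chosen large enough for the bound `C ρ̃^k`
to be inductive.
-/

theorem norm_comp_sub_fixedPoint_le {H : Type*} [SeminormedAddCommGroup H] {F T : H → H}
    {ρ δ : ℝ} {ustar : H} (hF : ∀ v w : H, ‖F v - F w‖ ≤ ρ * ‖v - w‖) (hfix : F ustar = ustar)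
    (hT : ∀ v w : H, ‖T v - T w‖ ≤ ‖v - w‖) (hδ : ‖T ustar - ustar‖ ≤ δ) (v : H) :
    ‖T (F v) - ustar‖ ≤ ρ * ‖v - ustar‖ + δ :=
  calc ‖T (F v) - ustar‖ ≤ ‖T (F v) - T ustar‖ + ‖T ustar - ustar‖ :=
        norm_sub_le_norm_sub_add_norm_sub _ _ _
    _ ≤ ‖F v - F ustar‖ + δ := by rw [hfix]; exact add_le_add (hT _ _) hδ
    _ ≤ ρ * ‖v - ustar‖ + δ := add_le_add (hF _ _) le_rfl

theorem le_mul_pow_of_le_mul_add_mul_pow {e : ℕ → ℝ} {ρ r b C : ℝ} (hρ : 0 ≤ ρ) (hr : 0 ≤ r)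
    (h0 : e 0 ≤ C) (hstep : ∀ k, e (k + 1) ≤ ρ * e k + b * r ^ k) (hC : ρ * C + b ≤ C * r) :
    ∀ k, e k ≤ C * r ^ k
  | 0 => by simpa using h0
  | k + 1 =>
    calc e (k + 1) ≤ ρ * e k + b * r ^ k := hstep k
      _ ≤ ρ * (C * r ^ k) + b * r ^ k := by
          gcongr; exact le_mul_pow_of_le_mul_add_mul_pow hρ hr h0 hstep hC k
      _ = (ρ * C + b) * r ^ k := by ring
      _ ≤ C * r * r ^ k := by gcongr
      _ = C * r ^ (k + 1) := by ring

theorem mul_add_le_mul_of_one_le {ρ r a b K : ℝ} (hρr : ρ < r) (ha : 0 ≤ a) (hb : 0 ≤ b)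
    (hK : 1 ≤ K) : ρ * (a + K * b / (r - ρ)) + b ≤ (a + K * b / (r - ρ)) * r := by
  have hrρ : 0 < r - ρ := sub_pos.mpr hρr
  have hsplit : (a + K * b / (r - ρ)) * r - ρ * (a + K * b / (r - ρ)) = (r - ρ) * a + K * b := by
    field_simp
  nlinarith [mul_nonneg hrρ.le ha]

theorem Real.rpow_two_div_sub_rpow_one_sub_half {x p : ℝ} (hx : 0 ≤ x) (hp : p ≠ 2) :
    (x ^ (2 / (2 - p))) ^ (1 - p / 2) = x := by
  have hp' : 1 - p / 2 ≠ 0 := by contrapose! hp; linarith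
  have hinv : 2 / (2 - p) = (1 - p / 2)⁻¹ := by
    have : (2 : ℝ) - p ≠ 0 := sub_ne_zero.mpr hp.symm
    field_simp
  rw [hinv, Real.rpow_inv_rpow hx hp']

theorem apriori_iteration_wlp_rate_general
    {H : Type*} [NormedAddCommGroup H]
    (F : H → H) (ρ : ℝ) (hρ0 : 0 < ρ) (hρ1 : ρ < 1)
    (hF : ∀ v w : H, ‖F v - F w‖ ≤ ρ * ‖v - w‖)
    (ustar : H) (hfix : F ustar = ustar)
    (S : ℝ → H → H)
    (hS : ∀ α : ℝ, 0 < α → ∀ v w : H, ‖S α v - S α w‖ ≤ ‖v - w‖)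
    (p : ℝ) (hp2 : p < 2)
    (M : ℝ) (hM : 0 ≤ M)
    (happrox : ∀ α : ℝ, 0 < α → ‖S α ustar - ustar‖ ≤ M * α ^ (1 - p/2))
    (c0 : ℝ) (hc0 : 0 < c0)
    (ρt : ℝ) (hρρt : ρ < ρt)
    (u : ℕ → H) (hu0 : u 0 = 0)
    (hrec : ∀ k : ℕ, u (k + 1) = S ((ρt ^ (k + 1) * c0) ^ (2 / (2 - p))) (F (u k))) :
    ∀ k : ℕ,
      ‖u k - ustar‖
        ≤ (‖ustar‖ + ((1 + ρ) / (1 - ρ)) * c0 * M * ρt / (ρt - ρ)) * ρt ^ k := by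
  have hρt : 0 < ρt := hρ0.trans hρρt
  have hK : 1 ≤ (1 + ρ) / (1 - ρ) := by
    rw [le_div_iff₀ (sub_pos.mpr hρ1)]; linarith
  have hb : 0 ≤ c0 * M * ρt := by positivity
  have hconst := mul_add_le_mul_of_one_le hρρt (norm_nonneg ustar) hb hK
  simp only [← mul_assoc] at hconst
  refine le_mul_pow_of_le_mul_add_mul_pow (b := c0 * M * ρt) hρ0.le hρt.le ?_ ?_ hconst
  · simp only [hu0, zero_sub, norm_neg, le_add_iff_nonneg_right]
    exact div_nonneg (by positivity) (sub_pos.mpr hρρt).le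
  · intro k
    have hα : 0 < (ρt ^ (k + 1) * c0) ^ (2 / (2 - p)) := by positivity
    calc ‖u (k + 1) - ustar‖
        ≤ ρ * ‖u k - ustar‖ + M * ((ρt ^ (k + 1) * c0) ^ (2 / (2 - p))) ^ (1 - p / 2) := by
          rw [hrec k]
          exact norm_comp_sub_fixedPoint_le hF hfix (hS _ hα) (happrox _ hα) (u k)
      _ = ρ * ‖u k - ustar‖ + c0 * M * ρt * ρt ^ k := by
          rw [Real.rpow_two_div_sub_rpow_one_sub_half (by positivity) hp2.ne]
          ring

/-- **A priori parameter choice, algebraic decay, rate `ρ̃ > ρ`.** With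
`α_k = (ρ̃^{k+1} c₀)^{2/(2-p)}` and thresholding error `‖S_α u* - u*‖ ≤ M α^{1-p/2}`, the
iterates `u_{k+1} = S_{α_k}(F u_k)`, `u_0 = 0`, satisfy
`‖u_k - u*‖ ≤ (‖u*‖ + ((1+ρ)/(1-ρ)) c₀ M ρ̃/(ρ̃-ρ)) ρ̃^k`. -/
theorem apriori_iteration_wlp_rate
    {H : Type*} [NormedAddCommGroup H] [InnerProductSpace ℝ H] [CompleteSpace H]
    (F : H → H) (ρ : ℝ) (hρ0 : 0 < ρ) (hρ1 : ρ < 1)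
    (hF : ∀ v w : H, ‖F v - F w‖ ≤ ρ * ‖v - w‖)
    (ustar : H) (hfix : F ustar = ustar)
    (S : ℝ → H → H)
    (hS : ∀ α : ℝ, 0 < α → ∀ v w : H, ‖S α v - S α w‖ ≤ ‖v - w‖)
    (p : ℝ) (hp0 : 0 < p) (hp2 : p < 2)
    (M : ℝ) (hM : 0 ≤ M)
    (happrox : ∀ α : ℝ, 0 < α → ‖S α ustar - ustar‖ ≤ M * α ^ (1 - p/2))
    (c0 : ℝ) (hc0 : 0 < c0)
    (ρt : ℝ) (hρρt : ρ < ρt) (hρt1 : ρt < 1)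
    (u : ℕ → H) (hu0 : u 0 = 0)
    (hrec : ∀ k : ℕ, u (k + 1) = S ((ρt ^ (k + 1) * c0) ^ (2 / (2 - p))) (F (u k))) :
    ∀ k : ℕ,
      ‖u k - ustar‖
        ≤ (‖ustar‖ + ((1 + ρ) / (1 - ρ)) * c0 * M * ρt / (ρt - ρ)) * ρt ^ k :=
  apriori_iteration_wlp_rate_general F ρ hρ0 hρ1 hF ustar hfix S hS p hp2 M hM happrox c0 hc0 ρt
    hρρt u hu0 hrec
end

section
/- Let H be a real Hilbert space, F : H → H a contraction with factor ρ ∈ (0,1) with fixed point u*, and (S_α)_{α>0} a family of non-expansive self-maps of H. Let β > 0 and M ≥ 0 be such that ‖S_α(u*) − u*‖ ≤ M (1 + |ln α|)^{1/(2β)} α for all α > 0. Fix c_0 > 0, ρ̃ ∈ (ρ, 1), and set α_k := ρ̃^{k+1} c_0 for k ≥ 0. Then there exists a constant K > 0, depending only on ρ, ρ̃, β, c_0, M and ‖u*‖, such that the iteration u_0 := 0, u_{k+1} := S_{α_k}(F(u_k)) satisfies ‖u_k − u*‖ ≤ K (1 + k)^{1/(2β)} ρ̃^k for all k ≥ 0.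 -/
/-- **A priori parameter choice, exponential-type decay.** With `α_k = ρ̃^{k+1} c₀` and
thresholding error `‖S_α u* - u*‖ ≤ M (1 + |ln α|)^{1/(2β)} α`, there is a constant `K > 0`
depending only on `ρ, ρ̃, β, c₀, M` and (a bound `N` on) `‖u*‖` such that the iterates
`u_{k+1} = S_{α_k}(F u_k)`, `u_0 = 0`, satisfy `‖u_k - u*‖ ≤ K (1+k)^{1/(2β)} ρ̃^k`. -/
theorem apriori_iteration_exp
    {H : Type*} [NormedAddCommGroup H] [InnerProductSpace ℝ H] [CompleteSpace H]
    (ρ ρt β c0 M N : ℝ)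
    (hρ0 : 0 < ρ) (hρρt : ρ < ρt) (hρt1 : ρt < 1)
    (hβ : 0 < β) (hM : 0 ≤ M) (hc0 : 0 < c0) :
    ∃ K : ℝ, 0 < K ∧
      ∀ (F : H → H) (S : ℝ → H → H) (ustar : H) (u : ℕ → H),
        (∀ v w : H, ‖F v - F w‖ ≤ ρ * ‖v - w‖) →
        F ustar = ustar → ‖ustar‖ ≤ N →
        (∀ α : ℝ, 0 < α → ∀ v w : H, ‖S α v - S α w‖ ≤ ‖v - w‖) →
        (∀ α : ℝ, 0 < α →
          ‖S α ustar - ustar‖ ≤ M * (1 + |Real.log α|) ^ (1 / (2 * β)) * α) →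
        u 0 = 0 →
        (∀ k : ℕ, u (k + 1) = S (ρt ^ (k + 1) * c0) (F (u k))) →
        ∀ k : ℕ, ‖u k - ustar‖ ≤ K * ((1 : ℝ) + k) ^ (1 / (2 * β)) * ρt ^ k := by

  have hp0 : (0:ℝ) ≤ 1 / (2 * β) := by positivity
  set p : ℝ := 1 / (2 * β) with hp
  set C : ℝ := 1 + |Real.log ρt| + |Real.log c0| with hCdef
  have hC1 : (1:ℝ) ≤ C := by
    have := abs_nonneg (Real.log ρt)
    have := abs_nonneg (Real.log c0)
    simp only [hCdef]; linarith
  have hC0 : (0:ℝ) < C := by linarith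
  set D : ℝ := M * c0 * C ^ p with hDdef
  have hD0 : (0:ℝ) ≤ D := by positivity
  have hgap : (0:ℝ) < ρt - ρ := by linarith
  have hρt0 : (0:ℝ) < ρt := lt_trans hρ0 hρρt
  refine ⟨max N 0 + D * ρt / (ρt - ρ) + 1, by positivity, ?_⟩
  set K : ℝ := max N 0 + D * ρt / (ρt - ρ) + 1 with hKdef
  have hK0 : (0:ℝ) < K := by positivity
  have hK1 : D * ρt ≤ K * (ρt - ρ) := by
    have h1 : D * ρt / (ρt - ρ) * (ρt - ρ) = D * ρt := div_mul_cancel₀ _ (ne_of_gt hgap)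
    have h2 : D * ρt / (ρt - ρ) ≤ K := by
      have h3 : (0:ℝ) ≤ max N 0 := le_max_right N 0
      simp only [hKdef]; linarith
    calc D * ρt = D * ρt / (ρt - ρ) * (ρt - ρ) := h1.symm
      _ ≤ K * (ρt - ρ) := mul_le_mul_of_nonneg_right h2 hgap.le
  intro F S ustar u hF hFfix hN hS hSerr hu0 hrec k
  induction k with
  | zero =>
    have : ‖u 0 - ustar‖ = ‖ustar‖ := by rw [hu0]; simp
    rw [this]
    have h1 : (1:ℝ) + (0:ℕ) = 1 := by norm_num
    rw [h1, Real.one_rpow, pow_zero]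
    have : N ≤ K := by
      have h2 : N ≤ max N 0 := le_max_left N 0
      have h3 : (0:ℝ) ≤ D * ρt / (ρt - ρ) := by positivity
      simp only [hKdef]; linarith
    linarith
  | succ k ih =>
    have hα : (0:ℝ) < ρt ^ (k + 1) * c0 := by positivity
    -- error bound
    have herr : ‖S (ρt ^ (k + 1) * c0) ustar - ustar‖
        ≤ D * ((1:ℝ) + k) ^ p * ρt ^ (k + 1) := by
      have h1 := hSerr _ hα
      have hlog : 1 + |Real.log (ρt ^ (k + 1) * c0)| ≤ ((1:ℝ) + k) * C := by
        have hl : Real.log (ρt ^ (k + 1) * c0)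
            = (k + 1 : ℕ) * Real.log ρt + Real.log c0 := by
          rw [Real.log_mul (by positivity) (ne_of_gt hc0), Real.log_pow]
        have habs : |Real.log (ρt ^ (k + 1) * c0)|
            ≤ ((1:ℝ) + k) * |Real.log ρt| + |Real.log c0| := by
          rw [hl]
          refine le_trans (abs_add_le _ _) ?_
          rw [abs_mul]
          have : |((k + 1 : ℕ) : ℝ)| = (1:ℝ) + k := by
            push_cast; rw [abs_of_nonneg (by positivity)]; ring
          rw [this]
        have hk0 : (0:ℝ) ≤ (k:ℝ) := Nat.cast_nonneg k
        have ha : (0:ℝ) ≤ |Real.log ρt| := abs_nonneg _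
        have hb : (0:ℝ) ≤ |Real.log c0| := abs_nonneg _
        simp only [hCdef]
        nlinarith
      have hrpow : (1 + |Real.log (ρt ^ (k + 1) * c0)|) ^ p
          ≤ ((1:ℝ) + k) ^ p * C ^ p := by
        rw [← Real.mul_rpow (by positivity) (le_of_lt hC0)]
        exact Real.rpow_le_rpow (by positivity) hlog hp0
      calc ‖S (ρt ^ (k + 1) * c0) ustar - ustar‖
          ≤ M * (1 + |Real.log (ρt ^ (k + 1) * c0)|) ^ p * (ρt ^ (k + 1) * c0) := h1
        _ ≤ M * (((1:ℝ) + k) ^ p * C ^ p) * (ρt ^ (k + 1) * c0) := by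
            have := mul_le_mul_of_nonneg_left hrpow hM
            exact mul_le_mul_of_nonneg_right this (le_of_lt hα)
        _ = D * ((1:ℝ) + k) ^ p * ρt ^ (k + 1) := by simp only [hDdef]; ring
    -- contraction step
    have hstep : ‖u (k + 1) - ustar‖
        ≤ ρ * ‖u k - ustar‖ + D * ((1:ℝ) + k) ^ p * ρt ^ (k + 1) := by
      rw [hrec k]
      calc ‖S (ρt ^ (k + 1) * c0) (F (u k)) - ustar‖
          ≤ ‖S (ρt ^ (k + 1) * c0) (F (u k)) - S (ρt ^ (k + 1) * c0) ustar‖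
            + ‖S (ρt ^ (k + 1) * c0) ustar - ustar‖ := by
            have := dist_triangle (S (ρt ^ (k + 1) * c0) (F (u k)))
              (S (ρt ^ (k + 1) * c0) ustar) ustar
            simpa [dist_eq_norm] using this
        _ ≤ ‖F (u k) - F ustar‖ + D * ((1:ℝ) + k) ^ p * ρt ^ (k + 1) := by
            have h2 := hS _ hα (F (u k)) ustar
            have h4 : ‖F (u k) - ustar‖ = ‖F (u k) - F ustar‖ := by rw [hFfix]
            linarith [herr, h2, h4.le, h4.ge]
        _ ≤ ρ * ‖u k - ustar‖ + D * ((1:ℝ) + k) ^ p * ρt ^ (k + 1) := by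
            have := hF (u k) ustar
            linarith
    -- combine with induction hypothesis
    have hmono : ((1:ℝ) + k) ^ p ≤ ((1:ℝ) + (k + 1 : ℕ)) ^ p := by
      apply Real.rpow_le_rpow (by positivity) ?_ hp0
      push_cast; linarith
    have hbk : (0:ℝ) ≤ ((1:ℝ) + k) ^ p := by positivity
    have hpk : (0:ℝ) ≤ ρt ^ k := by positivity
    have hnorm0 : (0:ℝ) ≤ ‖u k - ustar‖ := norm_nonneg _
    calc ‖u (k + 1) - ustar‖
        ≤ ρ * ‖u k - ustar‖ + D * ((1:ℝ) + k) ^ p * ρt ^ (k + 1) := hstep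
      _ ≤ ρ * (K * ((1:ℝ) + k) ^ p * ρt ^ k) + D * ((1:ℝ) + k) ^ p * ρt ^ (k + 1) := by
          have := mul_le_mul_of_nonneg_left ih (le_of_lt hρ0)
          linarith
      _ = ((1:ℝ) + k) ^ p * ρt ^ k * (ρ * K + D * ρt) := by ring
      _ ≤ ((1:ℝ) + k) ^ p * ρt ^ k * (K * ρt) := by
          apply mul_le_mul_of_nonneg_left ?_ (by positivity)
          nlinarith
      _ = K * ((1:ℝ) + k) ^ p * ρt ^ (k + 1) := by ring
      _ ≤ K * ((1:ℝ) + (k + 1 : ℕ)) ^ p * ρt ^ (k + 1) := by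
          apply mul_le_mul_of_nonneg_right ?_ (by positivity)
          exact mul_le_mul_of_nonneg_left hmono (le_of_lt hK0)
end

section
/- Let p ∈ (0,2), ε > 0, α > 0, and let a = (a_k)_{k≥1} and b = (b_k)_{k≥1} be nonincreasing nonnegative real sequences in ℓ² with ‖a − b‖_{ℓ²} ≤ ε and M := sup_{n≥1} n^{1/p} a_n < ∞. Then #{i : b_i ≥ α} ≤ 4ε²/α² + 2^p M^p α^{−p}. -/
/-!
Split `{i | α ≤ b i}` according to whether `a i < α / 2`. On the first part `|a i - b i| > α / 2`,
so Chebyshev's inequality for `∑ (a k - b k)² ≤ ε²` bounds its size by `4ε²/α²`. On the second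
part `a i ≥ α / 2`, and the weak-ℓᵖ bound `(i + 1)^{1/p} a i ≤ M` forces `i + 1 ≤ (2M/α)^p`.
-/

open Set

theorem Memℓp.summable_sq {ι : Type*} {f : ι → ℝ} (hf : Memℓp f 2) :
    Summable fun i => f i ^ 2 := by
  simpa [Real.rpow_natCast, sq_abs] using hf.summable (by norm_num)

theorem Summable.finite_setOf_le {ι : Type*} {f : ι → ℝ} (hf : Summable f) {t : ℝ}
    (ht : 0 < t) : {i | t ≤ f i}.Finite :=
  (Filter.eventually_cofinite.mp (hf.tendsto_cofinite_zero.eventually (gt_mem_nhds ht))).subset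
    fun _ hi => not_lt.mpr hi

theorem Summable.ncard_setOf_le_mul_le_tsum {ι : Type*} {f : ι → ℝ} (hf : Summable f)
    (hf0 : ∀ i, 0 ≤ f i) {t : ℝ} (ht : 0 < t) :
    ({i | t ≤ f i}.ncard : ℝ) * t ≤ ∑' i, f i := by
  have hfin := hf.finite_setOf_le ht
  calc ({i | t ≤ f i}.ncard : ℝ) * t = ∑ _i ∈ hfin.toFinset, t := by
        rw [Finset.sum_const, nsmul_eq_mul, ncard_eq_toFinset_card _ hfin]
    _ ≤ ∑ i ∈ hfin.toFinset, f i := Finset.sum_le_sum fun _ hi => hfin.mem_toFinset.mp hi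
    _ ≤ ∑' i, f i := hf.sum_le_tsum _ fun i _ => hf0 i

section WeakLp

variable {p M t : ℝ} {a : ℕ → ℝ}

theorem setOf_le_subset_Iio_floor_rpow (hp : 0 < p) (ht : 0 < t)
    (hM : ∀ n : ℕ, ((n : ℝ) + 1) ^ (1 / p) * a n ≤ M) :
    {i | t ≤ a i} ⊆ Iio ⌊(M / t) ^ p⌋₊ := by
  intro i hi
  have hroot : ((i : ℝ) + 1) ^ (1 / p) ≤ M / t := by
    rw [le_div_iff₀ ht]
    exact (mul_le_mul_of_nonneg_left hi (by positivity)).trans (hM i)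
  have hi1 : ((i + 1 : ℕ) : ℝ) ≤ (M / t) ^ p := by
    calc ((i + 1 : ℕ) : ℝ) = (((i : ℝ) + 1) ^ (1 / p)) ^ p := by
          rw [one_div, Real.rpow_inv_rpow (by positivity) hp.ne']; push_cast; ring
      _ ≤ (M / t) ^ p := Real.rpow_le_rpow (by positivity) hroot hp.le
  exact Nat.le_floor hi1

theorem ncard_setOf_le_le_div_rpow (hp : 0 < p) (ht : 0 < t) (hM0 : 0 ≤ M)
    (hM : ∀ n : ℕ, ((n : ℝ) + 1) ^ (1 / p) * a n ≤ M) :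
    ({i | t ≤ a i}.ncard : ℝ) ≤ (M / t) ^ p :=
  calc ({i | t ≤ a i}.ncard : ℝ) ≤ ((Iio ⌊(M / t) ^ p⌋₊).ncard : ℝ) := by
        exact_mod_cast ncard_le_ncard (setOf_le_subset_Iio_floor_rpow hp ht hM) (finite_Iio _)
    _ ≤ (M / t) ^ p := by
        rw [ncard_Iio_nat]; exact Nat.floor_le (by positivity)

end WeakLp

theorem count_above_threshold_wlp_general (p : ℝ) (hp0 : 0 < p)
    (ε α : ℝ) (hα : 0 < α)
    (a b : ℕ → ℝ)
    (ha0 : ∀ k, 0 ≤ a k)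
    (hal2 : Memℓp a 2) (hbl2 : Memℓp b 2)
    (hdist : Real.sqrt (∑' k : ℕ, (a k - b k) ^ 2) ≤ ε)
    (M : ℝ) (hM : ∀ n : ℕ, ((n : ℝ) + 1) ^ (1/p) * a n ≤ M) :
    (({i : ℕ | α ≤ b i}).ncard : ℝ)
      ≤ 4 * ε ^ 2 / α ^ 2 + 2 ^ p * M ^ p * α ^ (-p) := by
  have hα2 : 0 < α / 2 := half_pos hα
  have hsum : Summable fun k => (a k - b k) ^ 2 := (hal2.sub hbl2).summable_sq
  have htsum : ∑' k, (a k - b k) ^ 2 ≤ ε ^ 2 := (Real.sqrt_le_iff.mp hdist).2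
  have hM0 : 0 ≤ M := (ha0 0).trans (by simpa using hM 0)
  have hsplit : {i | α ≤ b i} ⊆ {i | (α / 2) ^ 2 ≤ (a i - b i) ^ 2} ∪ {i | α / 2 ≤ a i} := by
    intro i (hi : α ≤ b i)
    by_cases hai : α / 2 ≤ a i
    · exact Or.inr hai
    · exact Or.inl (show (α / 2) ^ 2 ≤ (a i - b i) ^ 2 by nlinarith)
  have hfin := (hsum.finite_setOf_le (pow_pos hα2 2)).union
    ((finite_Iio _).subset (setOf_le_subset_Iio_floor_rpow hp0 hα2 hM))
  have hfar := hsum.ncard_setOf_le_mul_le_tsum (fun _ => sq_nonneg _) (pow_pos hα2 2)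
  have hrpow : (M / (α / 2)) ^ p = 2 ^ p * M ^ p * α ^ (-p) := by
    rw [div_div_eq_mul_div, Real.div_rpow (by positivity) hα.le, Real.mul_rpow hM0 (by norm_num),
      Real.rpow_neg hα.le]
    ring
  calc ({i | α ≤ b i}.ncard : ℝ)
      ≤ {i | (α / 2) ^ 2 ≤ (a i - b i) ^ 2}.ncard + {i | α / 2 ≤ a i}.ncard := by
        exact_mod_cast (ncard_le_ncard hsplit hfin).trans (ncard_union_le _ _)
    _ ≤ 4 * ε ^ 2 / α ^ 2 + 2 ^ p * M ^ p * α ^ (-p) := by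
        gcongr
        · rw [le_div_iff₀ (by positivity)]; nlinarith
        · exact hrpow ▸ ncard_setOf_le_le_div_rpow hp0 hα2 hM0 hM

/-- **Counting lemma, weak-ℓᵖ case.** If `a, b` are nonincreasing nonnegative ℓ² sequences
with `‖a - b‖_{ℓ²} ≤ ε` and `a` has weak-ℓᵖ bound `M` (i.e. `n^{1/p} a_n ≤ M` for `n ≥ 1`,
written 0-indexed), then `#{i : b_i ≥ α} ≤ 4ε²/α² + 2ᵖ Mᵖ α⁻ᵖ`. -/
theorem count_above_threshold_wlp (p : ℝ) (hp0 : 0 < p) (hp2 : p < 2)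
    (ε α : ℝ) (hε : 0 < ε) (hα : 0 < α)
    (a b : ℕ → ℝ) (ha : Antitone a) (hb : Antitone b)
    (ha0 : ∀ k, 0 ≤ a k) (hb0 : ∀ k, 0 ≤ b k)
    (hal2 : Memℓp a 2) (hbl2 : Memℓp b 2)
    (hdist : Real.sqrt (∑' k : ℕ, (a k - b k) ^ 2) ≤ ε)
    (M : ℝ) (hM : ∀ n : ℕ, ((n : ℝ) + 1) ^ (1/p) * a n ≤ M) :
    (({i : ℕ | α ≤ b i}).ncard : ℝ)
      ≤ 4 * ε ^ 2 / α ^ 2 + 2 ^ p * M ^ p * α ^ (-p) :=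
  count_above_threshold_wlp_general p hp0 ε α hα a b ha0 hal2 hbl2 hdist M hM
end

section
/- Let H be a real Hilbert space and A : H → H a bounded self-adjoint linear operator satisfying γ‖v‖² ≤ ⟨Av, v⟩ ≤ Γ‖v‖² for all v ∈ H, where 0 < γ ≤ Γ; set μ := 2/(γ + Γ), ρ := (Γ − γ)/(Γ + γ), and let f ∈ H and u* ∈ H with Au* = f. Let τ_1 ∈ (0,1), u ∈ H, and r ∈ H with ‖r − (Au − f)‖ ≤ τ_1 ‖r‖. Then ‖(u − μr) − u*‖ ≤ (ρ + 2τ_1/(1 − τ_1)) ‖u − u*‖. -/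
open scoped RealInnerProductSpace

/-!
Write `e = u - u*`, `B = I - μA` and `A u - f = A e`. Then `(u - μ r) - u* = B e - μ (r - A e)`.
The quadratic form of the symmetric operator `B` takes values in `[-ρ, ρ]` on the unit sphere,
so `‖B‖ ≤ ρ`; likewise `‖A‖ ≤ Γ`. The relative residual error gives
`‖r - A e‖ ≤ τ₁/(1-τ₁) ‖A e‖`, and `μ Γ ≤ 2` turns the perturbation into `2τ₁/(1-τ₁) ‖e‖`.
-/

namespace ContinuousLinearMap

variable {𝕜 E : Type*} [RCLike 𝕜] [NormedAddCommGroup E] [InnerProductSpace 𝕜 E]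

theorem opNorm_le_of_abs_re_inner_self_le {T : E →L[𝕜] E} (hT : (T : E →ₗ[𝕜] E).IsSymmetric)
    {c : ℝ} (hc : 0 ≤ c) (h : ∀ x, |RCLike.re (inner 𝕜 (T x) x)| ≤ c * ‖x‖ ^ 2) : ‖T‖ ≤ c := by
  rw [T.norm_eq_iSup_rayleighQuotient hT]
  refine ciSup_le fun x => ?_
  rw [rayleighQuotient, reApplyInnerSelf_apply, abs_div, abs_sq]
  rcases eq_or_ne x 0 with rfl | hx
  · simpa using hc
  · exact div_le_of_le_mul₀ (by positivity) hc (h x)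

end ContinuousLinearMap

section QuadraticFormBounds

variable {H : Type*} [NormedAddCommGroup H] [InnerProductSpace ℝ H] {A : H →L[ℝ] H} {γ Γ : ℝ}

theorem opNorm_le_of_inner_self_le (hA : (A : H →ₗ[ℝ] H).IsSymmetric) (hγ : 0 ≤ γ) (hγΓ : γ ≤ Γ)
    (hlow : ∀ v : H, γ * ‖v‖ ^ 2 ≤ ⟪A v, v⟫) (hupp : ∀ v : H, ⟪A v, v⟫ ≤ Γ * ‖v‖ ^ 2) :
    ‖A‖ ≤ Γ := by
  refine A.opNorm_le_of_abs_re_inner_self_le hA (hγ.trans hγΓ) fun v => ?_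
  rw [RCLike.re_to_real, abs_le]
  constructor <;> nlinarith [hlow v, hupp v, sq_nonneg ‖v‖]

theorem norm_id_sub_smul_le_of_inner_self_le (hA : (A : H →ₗ[ℝ] H).IsSymmetric)
    (hγΓ₀ : 0 < γ + Γ) (hγΓ : γ ≤ Γ)
    (hlow : ∀ v : H, γ * ‖v‖ ^ 2 ≤ ⟪A v, v⟫) (hupp : ∀ v : H, ⟪A v, v⟫ ≤ Γ * ‖v‖ ^ 2) :
    ‖ContinuousLinearMap.id ℝ H - (2 / (γ + Γ)) • A‖ ≤ (Γ - γ) / (Γ + γ) := by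
  have hρ : (Γ - γ) / (Γ + γ) = 1 - 2 / (γ + Γ) * γ ∧
      -((Γ - γ) / (Γ + γ)) = 1 - 2 / (γ + Γ) * Γ := by
    have : Γ + γ ≠ 0 := by linarith
    constructor <;> field_simp <;> ring
  set μ := 2 / (γ + Γ)
  have hμ : 0 ≤ μ := by positivity
  have hB : ((ContinuousLinearMap.id ℝ H - μ • A : H →L[ℝ] H) : H →ₗ[ℝ] H).IsSymmetric := by
    simpa [ContinuousLinearMap.toLinearMap_sub] using LinearMap.IsSymmetric.id.sub (hA.smul rfl)
  refine ContinuousLinearMap.opNorm_le_of_abs_re_inner_self_le hB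
    (div_nonneg (by linarith) (by linarith)) fun v => ?_
  simp only [RCLike.re_to_real, sub_apply, smul_apply,
    ContinuousLinearMap.id_apply, inner_sub_left, real_inner_smul_left,
    real_inner_self_eq_norm_sq, abs_le]
  constructor <;> nlinarith [mul_le_mul_of_nonneg_left (hlow v) hμ,
    mul_le_mul_of_nonneg_left (hupp v) hμ]

end QuadraticFormBounds

theorem norm_sub_le_of_norm_sub_le_mul_norm {E : Type*} [SeminormedAddGroup E] {r s : E} {τ : ℝ}
    (hτ₀ : 0 ≤ τ) (hτ₁ : τ < 1) (h : ‖r - s‖ ≤ τ * ‖r‖) : ‖r - s‖ ≤ τ / (1 - τ) * ‖s‖ := by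
  have hr : (1 - τ) * ‖r‖ ≤ ‖s‖ := by linarith [norm_le_norm_add_norm_sub' r s]
  rw [div_mul_eq_mul_div, le_div_iff₀ (by linarith)]
  nlinarith

theorem richardson_step_inexact_residual_general
    {H : Type*} [NormedAddCommGroup H] [InnerProductSpace ℝ H]
    (A : H →L[ℝ] H) (hsa : ∀ v w : H, ⟪A v, w⟫ = ⟪v, A w⟫)
    (γ Γ : ℝ) (hγ : 0 < γ) (hγΓ : γ ≤ Γ)
    (hlow : ∀ v : H, γ * ‖v‖ ^ 2 ≤ ⟪A v, v⟫)
    (hupp : ∀ v : H, ⟪A v, v⟫ ≤ Γ * ‖v‖ ^ 2)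
    (f ustar : H) (hsol : A ustar = f)
    (τ₁ : ℝ) (hτ₁0 : 0 < τ₁) (hτ₁1 : τ₁ < 1)
    (u r : H) (hres : ‖r - (A u - f)‖ ≤ τ₁ * ‖r‖) :
    ‖(u - (2 / (γ + Γ)) • r) - ustar‖
      ≤ ((Γ - γ) / (Γ + γ) + 2 * τ₁ / (1 - τ₁)) * ‖u - ustar‖ := by
  set μ := 2 / (γ + Γ)
  set e := u - ustar
  have hA : (A : H →ₗ[ℝ] H).IsSymmetric := hsa
  have hμ : 0 ≤ μ := div_nonneg zero_le_two (by linarith)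
  have hμΓ : μ * Γ ≤ 2 := by
    rw [div_mul_eq_mul_div, div_le_iff₀ (by linarith)]
    linarith
  have hAe : A u - f = A e := by rw [← hsol, ← map_sub]
  have hcontr : ‖e - μ • A e‖ ≤ (Γ - γ) / (Γ + γ) * ‖e‖ :=
    ((ContinuousLinearMap.id ℝ H - μ • A).le_opNorm e).trans <| by
      gcongr
      exact norm_id_sub_smul_le_of_inner_self_le hA (by linarith) hγΓ hlow hupp
  have hAnorm : ‖A e‖ ≤ Γ * ‖e‖ :=
    (A.le_opNorm e).trans <| by gcongr; exact opNorm_le_of_inner_self_le hA hγ.le hγΓ hlow hupp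
  have hrA : ‖r - A e‖ ≤ τ₁ / (1 - τ₁) * ‖A e‖ :=
    norm_sub_le_of_norm_sub_le_mul_norm hτ₁0.le hτ₁1 (hAe ▸ hres)
  have hτ : 0 ≤ τ₁ / (1 - τ₁) := div_nonneg hτ₁0.le (by linarith)
  calc ‖(u - μ • r) - ustar‖ = ‖(e - μ • A e) - μ • (r - A e)‖ := by
        congr 1; simp only [e, smul_sub]; abel
    _ ≤ ‖e - μ • A e‖ + μ * ‖r - A e‖ :=
        (norm_sub_le _ _).trans_eq (by rw [norm_smul, Real.norm_of_nonneg hμ])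
    _ ≤ (Γ - γ) / (Γ + γ) * ‖e‖ + μ * (τ₁ / (1 - τ₁) * (Γ * ‖e‖)) := by
        gcongr
        exact hrA.trans (by gcongr)
    _ = (Γ - γ) / (Γ + γ) * ‖e‖ + μ * Γ * (τ₁ / (1 - τ₁)) * ‖e‖ := by ring
    _ ≤ ((Γ - γ) / (Γ + γ) + 2 * τ₁ / (1 - τ₁)) * ‖e‖ := by
        rw [mul_div_assoc, add_mul]
        gcongr

/-- **One Richardson step with inexactly evaluated residual.** If `A` is bounded self-adjoint
with spectrum in `[γ, Γ]`, `μ = 2/(γ+Γ)`, `ρ = (Γ-γ)/(Γ+γ)`, `A u* = f`, and the computed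
residual `r` satisfies `‖r - (A u - f)‖ ≤ τ₁‖r‖` with `τ₁ ∈ (0,1)`, then
`‖(u - μ r) - u*‖ ≤ (ρ + 2τ₁/(1-τ₁))‖u - u*‖`. -/
theorem richardson_step_inexact_residual
    {H : Type*} [NormedAddCommGroup H] [InnerProductSpace ℝ H] [CompleteSpace H]
    (A : H →L[ℝ] H) (hsa : ∀ v w : H, ⟪A v, w⟫ = ⟪v, A w⟫)
    (γ Γ : ℝ) (hγ : 0 < γ) (hγΓ : γ ≤ Γ)
    (hlow : ∀ v : H, γ * ‖v‖ ^ 2 ≤ ⟪A v, v⟫)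
    (hupp : ∀ v : H, ⟪A v, v⟫ ≤ Γ * ‖v‖ ^ 2)
    (f ustar : H) (hsol : A ustar = f)
    (τ₁ : ℝ) (hτ₁0 : 0 < τ₁) (hτ₁1 : τ₁ < 1)
    (u r : H) (hres : ‖r - (A u - f)‖ ≤ τ₁ * ‖r‖) :
    ‖(u - (2 / (γ + Γ)) • r) - ustar‖
      ≤ ((Γ - γ) / (Γ + γ) + 2 * τ₁ / (1 - τ₁)) * ‖u - ustar‖ :=
  richardson_step_inexact_residual_general A hsa γ Γ hγ hγΓ hlow hupp f ustar hsol τ₁ hτ₁0 hτ₁1 u r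
    hres
end

section
/- Let H be a real Hilbert space and A : H → H a bounded self-adjoint linear operator satisfying γ‖v‖² ≤ ⟨Av, v⟩ ≤ Γ‖v‖² for all v ∈ H, where 0 < γ ≤ Γ; set μ := 2/(γ + Γ) and ρ := (Γ − γ)/(Γ + γ). Let f ∈ H, let S : H → H be non-expansive, and let u^α be the unique fixed point of the contraction v ↦ S(v − μ(Av − f)). Let τ_2 ∈ (0,1), u ∈ H, r ∈ H, set u_+ := S(u − μr), and assume μ‖r − (Au − f)‖ ≤ τ_2 ‖u_+ − u‖. Then: (i) ‖u_+ − u‖ ≤ ((1 + ρ)/(1 − τ_2)) ‖u − u^α‖, and (ii) ‖u_+ − u^α‖ ≤ (ρ + (1 + ρ)τ_2/(1 − τ_2)) ‖u − u^α‖. -/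
/-!
Write `G v = v - μ (A v - f)` with `μ = 2/(γ+Γ)`. Then `G u - G u^α = (1 - μA)(u - u^α)`, and
for self-adjoint `A` the norm of `1 - μA` is the supremum of `|⟨(1 - μA)x, x⟩| / ‖x‖²`, which
the ellipticity bounds confine to `ρ`. Since `S` is non-expansive and `u^α = S(G u^α)`,
`‖u₊ - u^α‖ ≤ ρ‖u - u^α‖ + μ‖r - (Au - f)‖ ≤ ρ‖u - u^α‖ + τ₂‖u₊ - u‖`; combined with the triangle
inequality `‖u₊ - u‖ ≤ ‖u₊ - u^α‖ + ‖u - u^α‖` this gives both estimates.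
-/

open scoped RealInnerProductSpace

section FixedPoint

variable {X : Type*} [PseudoMetricSpace X] {S G : X → X} {ρ τ : ℝ} {u uα w : X}

theorem dist_map_le_of_fixedPoint_comp (hS : ∀ v w, dist (S v) (S w) ≤ dist v w)
    (huα : uα = S (G uα)) (hG : dist (G u) (G uα) ≤ ρ * dist u uα) :
    dist (S w) uα ≤ ρ * dist u uα + dist w (G u) := by
  calc dist (S w) uα = dist (S w) (S (G uα)) := by rw [← huα]
    _ ≤ dist w (G uα) := hS w (G uα)
    _ ≤ dist w (G u) + dist (G u) (G uα) := dist_triangle _ _ _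
    _ ≤ ρ * dist u uα + dist w (G u) := by linarith

theorem dist_perturbed_step_le (hS : ∀ v w, dist (S v) (S w) ≤ dist v w)
    (huα : uα = S (G uα)) (hG : dist (G u) (G uα) ≤ ρ * dist u uα)
    (hτ0 : 0 ≤ τ) (hτ1 : τ < 1) (hw : dist w (G u) ≤ τ * dist (S w) u) :
    dist (S w) u ≤ (1 + ρ) / (1 - τ) * dist u uα ∧
      dist (S w) uα ≤ (ρ + (1 + ρ) * τ / (1 - τ)) * dist u uα := by
  have hfix : dist (S w) uα ≤ ρ * dist u uα + τ * dist (S w) u :=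
    (dist_map_le_of_fixedPoint_comp hS huα hG).trans (by linarith)
  have hstep : dist (S w) u ≤ (1 + ρ) / (1 - τ) * dist u uα := by
    rw [div_mul_eq_mul_div, le_div_iff₀ (by linarith)]
    linarith [dist_triangle_right (S w) u uα]
  refine ⟨hstep, hfix.trans ?_⟩
  calc ρ * dist u uα + τ * dist (S w) u
      ≤ ρ * dist u uα + τ * ((1 + ρ) / (1 - τ) * dist u uα) := by gcongr
    _ = (ρ + (1 + ρ) * τ / (1 - τ)) * dist u uα := by ring

end FixedPoint

section Operator

variable {E : Type*} [NormedAddCommGroup E] [InnerProductSpace ℝ E]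

theorem ContinuousLinearMap.opNorm_le_of_abs_inner_self_le {T : E →L[ℝ] E}
    (hT : (T : E →ₗ[ℝ] E).IsSymmetric) {c : ℝ} (hc : 0 ≤ c)
    (h : ∀ x, |⟪T x, x⟫| ≤ c * ‖x‖ ^ 2) : ‖T‖ ≤ c := by
  rw [T.norm_eq_iSup_rayleighQuotient hT]
  refine ciSup_le fun x => ?_
  rw [rayleighQuotient, reApplyInnerSelf_apply, RCLike.re_to_real, abs_div, abs_sq]
  exact div_le_of_le_mul₀ (sq_nonneg _) hc (h x)

variable {A : E →L[ℝ] E} {γ Γ μ : ℝ}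

theorem norm_one_sub_smul_le_max (hA : (A : E →ₗ[ℝ] E).IsSymmetric)
    (hlow : ∀ v, γ * ‖v‖ ^ 2 ≤ ⟪A v, v⟫) (hupp : ∀ v, ⟪A v, v⟫ ≤ Γ * ‖v‖ ^ 2) (hμ : 0 ≤ μ) :
    ‖1 - μ • A‖ ≤ max |1 - μ * γ| |1 - μ * Γ| := by
  have hsymm : ((1 - μ • A : E →L[ℝ] E) : E →ₗ[ℝ] E).IsSymmetric :=
    LinearMap.IsSymmetric.one.sub (hA.smul (by simp))
  refine ContinuousLinearMap.opNorm_le_of_abs_inner_self_le hsymm (by positivity) fun x => ?_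
  have hquad : ⟪(1 - μ • A) x, x⟫ = ‖x‖ ^ 2 - μ * ⟪A x, x⟫ := by
    simp [inner_sub_left, real_inner_smul_left]
  have hlo : μ * (γ * ‖x‖ ^ 2) ≤ μ * ⟪A x, x⟫ := mul_le_mul_of_nonneg_left (hlow x) hμ
  have hup : μ * ⟪A x, x⟫ ≤ μ * (Γ * ‖x‖ ^ 2) := mul_le_mul_of_nonneg_left (hupp x) hμ
  have h1 : 1 - μ * γ ≤ max |1 - μ * γ| |1 - μ * Γ| := (le_abs_self _).trans (le_max_left _ _)
  have h2 : -(1 - μ * Γ) ≤ max |1 - μ * γ| |1 - μ * Γ| :=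
    (neg_le_abs _).trans (le_max_right _ _)
  have hx2 := sq_nonneg ‖x‖
  rw [hquad, abs_le]
  constructor <;> nlinarith

theorem norm_one_sub_optimal_smul_le (hA : (A : E →ₗ[ℝ] E).IsSymmetric)
    (hlow : ∀ v, γ * ‖v‖ ^ 2 ≤ ⟪A v, v⟫) (hupp : ∀ v, ⟪A v, v⟫ ≤ Γ * ‖v‖ ^ 2)
    (hγ : 0 < γ) (hγΓ : γ ≤ Γ) :
    ‖1 - (2 / (γ + Γ)) • A‖ ≤ (Γ - γ) / (Γ + γ) := by
  have hsum : Γ + γ ≠ 0 := by linarith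
  have hρ : 0 ≤ (Γ - γ) / (Γ + γ) := div_nonneg (by linarith) (by linarith)
  have hlow_eq : 1 - 2 / (γ + Γ) * γ = (Γ - γ) / (Γ + γ) := by
    rw [add_comm γ Γ]; field_simp; ring
  have hupp_eq : 1 - 2 / (γ + Γ) * Γ = -((Γ - γ) / (Γ + γ)) := by
    rw [add_comm γ Γ]; field_simp; ring
  have := norm_one_sub_smul_le_max hA hlow hupp (μ := 2 / (γ + Γ))
    (div_nonneg zero_le_two (by linarith))
  rwa [hlow_eq, hupp_eq, abs_neg, abs_of_nonneg hρ, max_self] at this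

end Operator

theorem perturbed_thresholded_richardson_step_general
    {H : Type*} [NormedAddCommGroup H] [InnerProductSpace ℝ H]
    (A : H →L[ℝ] H) (hsa : ∀ v w : H, ⟪A v, w⟫ = ⟪v, A w⟫)
    (γ Γ : ℝ) (hγ : 0 < γ) (hγΓ : γ ≤ Γ)
    (hlow : ∀ v : H, γ * ‖v‖ ^ 2 ≤ ⟪A v, v⟫)
    (hupp : ∀ v : H, ⟪A v, v⟫ ≤ Γ * ‖v‖ ^ 2)
    (f : H) (S : H → H) (hS : ∀ v w : H, ‖S v - S w‖ ≤ ‖v - w‖)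
    (uα : H) (huα : uα = S (uα - (2 / (γ + Γ)) • (A uα - f)))
    (τ₂ : ℝ) (hτ₂0 : 0 < τ₂) (hτ₂1 : τ₂ < 1)
    (u r uplus : H) (huplus : uplus = S (u - (2 / (γ + Γ)) • r))
    (hres : (2 / (γ + Γ)) * ‖r - (A u - f)‖ ≤ τ₂ * ‖uplus - u‖) :
    ‖uplus - u‖ ≤ ((1 + (Γ - γ) / (Γ + γ)) / (1 - τ₂)) * ‖u - uα‖
    ∧ ‖uplus - uα‖
        ≤ ((Γ - γ) / (Γ + γ) + (1 + (Γ - γ) / (Γ + γ)) * τ₂ / (1 - τ₂)) * ‖u - uα‖ := by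
  set μ := 2 / (γ + Γ)
  have hμ : 0 < μ := div_pos two_pos (by linarith)
  set G : H → H := fun v => v - μ • (A v - f)
  have hG : dist (G u) (G uα) ≤ (Γ - γ) / (Γ + γ) * dist u uα := by
    have hdiff : G u - G uα = (1 - μ • A) (u - uα) := by
      simp only [G, sub_apply, one_apply_eq_self, smul_apply, map_sub, smul_sub]
      abel
    rw [dist_eq_norm, dist_eq_norm, hdiff]
    exact ((1 - μ • A).le_opNorm _).trans <| mul_le_mul_of_nonneg_right
      (norm_one_sub_optimal_smul_le hsa hlow hupp hγ hγΓ) (norm_nonneg _)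
  have hw : dist (u - μ • r) (G u) ≤ τ₂ * dist (S (u - μ • r)) u := by
    have hpert : u - μ • r - G u = -(μ • (r - (A u - f))) := by
      simp only [G, smul_sub]; abel
    rwa [dist_eq_norm, dist_eq_norm, ← huplus, hpert, norm_neg, norm_smul,
      Real.norm_of_nonneg hμ.le]
  have hS' : ∀ v w, dist (S v) (S w) ≤ dist v w := by simpa only [dist_eq_norm] using hS
  simpa only [← huplus, dist_eq_norm] using
    dist_perturbed_step_le hS' huα hG hτ₂0.le hτ₂1 hw

/-- **Perturbed thresholded Richardson step.** Let `A` be bounded self-adjoint with spectrum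
in `[γ, Γ]`, `μ = 2/(γ+Γ)`, `ρ = (Γ-γ)/(Γ+γ)`, `S` non-expansive, and let `u^α` be the fixed
point of `v ↦ S(v - μ(Av - f))`. If `u₊ = S(u - μ r)` with
`μ‖r - (Au - f)‖ ≤ τ₂‖u₊ - u‖`, `τ₂ ∈ (0,1)`, then
(i) `‖u₊ - u‖ ≤ ((1+ρ)/(1-τ₂))‖u - u^α‖` and
(ii) `‖u₊ - u^α‖ ≤ (ρ + (1+ρ)τ₂/(1-τ₂))‖u - u^α‖`. -/
theorem perturbed_thresholded_richardson_step
    {H : Type*} [NormedAddCommGroup H] [InnerProductSpace ℝ H] [CompleteSpace H]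
    (A : H →L[ℝ] H) (hsa : ∀ v w : H, ⟪A v, w⟫ = ⟪v, A w⟫)
    (γ Γ : ℝ) (hγ : 0 < γ) (hγΓ : γ ≤ Γ)
    (hlow : ∀ v : H, γ * ‖v‖ ^ 2 ≤ ⟪A v, v⟫)
    (hupp : ∀ v : H, ⟪A v, v⟫ ≤ Γ * ‖v‖ ^ 2)
    (f : H) (S : H → H) (hS : ∀ v w : H, ‖S v - S w‖ ≤ ‖v - w‖)
    (uα : H) (huα : uα = S (uα - (2 / (γ + Γ)) • (A uα - f)))
    (τ₂ : ℝ) (hτ₂0 : 0 < τ₂) (hτ₂1 : τ₂ < 1)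
    (u r uplus : H) (huplus : uplus = S (u - (2 / (γ + Γ)) • r))
    (hres : (2 / (γ + Γ)) * ‖r - (A u - f)‖ ≤ τ₂ * ‖uplus - u‖) :
    ‖uplus - u‖ ≤ ((1 + (Γ - γ) / (Γ + γ)) / (1 - τ₂)) * ‖u - uα‖
    ∧ ‖uplus - uα‖
        ≤ ((Γ - γ) / (Γ + γ) + (1 + (Γ - γ) / (Γ + γ)) * τ₂ / (1 - τ₂)) * ‖u - uα‖ :=
  perturbed_thresholded_richardson_step_general A hsa γ Γ hγ hγΓ hlow hupp f S hS uα huα τ₂ hτ₂0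
    hτ₂1 u r uplus huplus hres
end

section
/- Let H be a real Hilbert space and A : H → H a bounded self-adjoint linear operator satisfying γ‖v‖² ≤ ⟨Av, v⟩ ≤ Γ‖v‖² for all v ∈ H, where 0 < γ ≤ Γ; set μ := 2/(γ + Γ), ρ := (Γ − γ)/(Γ + γ), and let f ∈ H and u* ∈ H with Au* = f. Let S : H → H be non-expansive and let u^α be the unique fixed point of the contraction G(v) := S(v − μ(Av − f)). Let ν ∈ (0,1), u ∈ H, and set u_+ := G(u), r_+ := Au_+ − f. If ‖u_+ − u‖ ≤ ((1 − ρ)ν/(Γρ)) ‖r_+‖, then ‖u_+ − u^α‖ ≤ ν ‖u_+ − u*‖ and consequently ‖u_+ − u*‖ ≤ (1 − ν)^{−1} ‖u^α − u*‖. -/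
/-!
The step `v ↦ v - μ (A v - f)` is affine with linear part `id - μ A`, a self-adjoint operator
whose quadratic form lies between `-ρ ‖v‖²` and `ρ ‖v‖²`; hence its norm is at most `ρ` and,
`S` being non-expansive, `G` is a `ρ`-contraction. The a posteriori estimate for contractions
gives `‖u₊ - u^α‖ ≤ ρ / (1 - ρ) ‖u₊ - u‖`, which the criterion turns into `(ν / Γ) ‖r₊‖`, and
`r₊ = A (u₊ - u*)` has norm at most `Γ ‖u₊ - u*‖`. The second claim follows from the first by the
triangle inequality through `u^α`.
-/

open scoped RealInnerProductSpace NNReal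

namespace ContinuousLinearMap

theorem norm_le_of_abs_reApplyInnerSelf_le {𝕜 E : Type*} [RCLike 𝕜] [NormedAddCommGroup E]
    [InnerProductSpace 𝕜 E] {T : E →L[𝕜] E} (hT : (T : E →ₗ[𝕜] E).IsSymmetric) {M : ℝ}
    (hM : 0 ≤ M) (h : ∀ x, |T.reApplyInnerSelf x| ≤ M * ‖x‖ ^ 2) : ‖T‖ ≤ M := by
  rw [T.norm_eq_iSup_rayleighQuotient hT]
  refine ciSup_le fun x ↦ ?_
  rcases eq_or_ne x 0 with rfl | hx
  · simpa using hM
  rw [rayleighQuotient, abs_div, abs_sq, div_le_iff₀ (by positivity)]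
  exact h x

end ContinuousLinearMap

theorem lipschitzWith_comp_gradientStep {H : Type*} [NormedAddCommGroup H]
    [NormedSpace ℝ H] {S : H → H} (hS : LipschitzWith 1 S) (A : H →L[ℝ] H) (f : H) (μ : ℝ) :
    LipschitzWith ‖ContinuousLinearMap.id ℝ H - μ • A‖₊ fun v ↦ S (v - μ • (A v - f)) := by
  have hstep : LipschitzWith ‖ContinuousLinearMap.id ℝ H - μ • A‖₊
      fun v ↦ v - μ • (A v - f) := LipschitzWith.of_dist_le_mul fun v w ↦ by
    have hsub : v - μ • (A v - f) - (w - μ • (A w - f))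
        = (ContinuousLinearMap.id ℝ H - μ • A) (v - w) := by
      simp only [FunLike.coe_sub, FunLike.coe_smul,
        ContinuousLinearMap.coe_id', Pi.sub_apply, Pi.smul_apply, id_eq, map_sub, smul_sub]
      abel
    rw [dist_eq_norm, dist_eq_norm, hsub, coe_nnnorm]
    exact ContinuousLinearMap.le_opNorm _ _
  have := hS.comp hstep
  rwa [one_mul] at this

section SpectralBounds

variable {H : Type*} [NormedAddCommGroup H] [InnerProductSpace ℝ H] {A : H →L[ℝ] H}
  {γ Γ : ℝ}

theorem norm_le_of_inner_bounds (hA : (A : H →ₗ[ℝ] H).IsSymmetric) (hγ : 0 ≤ γ) (hΓ : 0 ≤ Γ)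
    (hlow : ∀ v, γ * ‖v‖ ^ 2 ≤ ⟪A v, v⟫) (hupp : ∀ v, ⟪A v, v⟫ ≤ Γ * ‖v‖ ^ 2) : ‖A‖ ≤ Γ := by
  refine ContinuousLinearMap.norm_le_of_abs_reApplyInnerSelf_le hA hΓ fun v ↦ ?_
  rw [A.reApplyInnerSelf_apply, RCLike.re_to_real, abs_le]
  exact ⟨by nlinarith [hlow v, sq_nonneg ‖v‖], hupp v⟩

/-- The step size `μ = 2 / (γ + Γ)` balances the extreme values of the quadratic form of
`id - μ A`: `1 - μ γ = -(1 - μ Γ) = (Γ - γ) / (Γ + γ)`. -/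
theorem norm_id_sub_smul_le_of_inner_bounds (hA : (A : H →ₗ[ℝ] H).IsSymmetric)
    (hγΓ : γ ≤ Γ) (hsum : 0 < γ + Γ)
    (hlow : ∀ v, γ * ‖v‖ ^ 2 ≤ ⟪A v, v⟫) (hupp : ∀ v, ⟪A v, v⟫ ≤ Γ * ‖v‖ ^ 2) :
    ‖ContinuousLinearMap.id ℝ H - (2 / (γ + Γ)) • A‖ ≤ (Γ - γ) / (Γ + γ) := by
  have hμ : 0 < 2 / (γ + Γ) := by positivity
  have hsymm :
      ((ContinuousLinearMap.id ℝ H - (2 / (γ + Γ)) • A : H →L[ℝ] H) : H →ₗ[ℝ] H).IsSymmetric :=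
    fun v w ↦ by
      simp only [ContinuousLinearMap.coe_coe, FunLike.coe_sub,
        FunLike.coe_smul, ContinuousLinearMap.coe_id', Pi.sub_apply, Pi.smul_apply,
        id_eq, inner_sub_left, inner_sub_right, real_inner_smul_left, real_inner_smul_right]
      rw [show ⟪A v, w⟫ = ⟪v, A w⟫ from hA v w]
  refine ContinuousLinearMap.norm_le_of_abs_reApplyInnerSelf_le hsymm
    (div_nonneg (by linarith) (by linarith)) fun v ↦ ?_
  have hform : (ContinuousLinearMap.id ℝ H - (2 / (γ + Γ)) • A).reApplyInnerSelf v
      = ‖v‖ ^ 2 - 2 / (γ + Γ) * ⟪A v, v⟫ := by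
    simp [ContinuousLinearMap.reApplyInnerSelf_apply, inner_sub_left, real_inner_smul_left]
  have hne : γ + Γ ≠ 0 := hsum.ne'
  have hΓ : 1 - 2 / (γ + Γ) * Γ = -((Γ - γ) / (Γ + γ)) := by
    rw [add_comm Γ γ]; field_simp; ring
  have hγ : 1 - 2 / (γ + Γ) * γ = (Γ - γ) / (Γ + γ) := by
    rw [add_comm Γ γ]; field_simp; ring
  rw [hform, abs_le]
  constructor
  · nlinarith [mul_le_mul_of_nonneg_left (hupp v) hμ.le]
  · nlinarith [mul_le_mul_of_nonneg_left (hlow v) hμ.le]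

theorem contractingWith_gradientStep (hA : (A : H →ₗ[ℝ] H).IsSymmetric) (hγ : 0 < γ)
    (hγΓ : γ ≤ Γ) (hlow : ∀ v, γ * ‖v‖ ^ 2 ≤ ⟪A v, v⟫) (hupp : ∀ v, ⟪A v, v⟫ ≤ Γ * ‖v‖ ^ 2)
    {S : H → H} (hS : LipschitzWith 1 S) (f : H) :
    ContractingWith ((Γ - γ) / (Γ + γ)).toNNReal fun v ↦ S (v - (2 / (γ + Γ)) • (A v - f)) := by
  refine ⟨Real.toNNReal_lt_one.2 ((div_lt_one (by linarith)).2 (by linarith)),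
    (lipschitzWith_comp_gradientStep hS A f _).weaken ?_⟩
  rw [Real.le_toNNReal_iff_coe_le (div_nonneg (by linarith) (by linarith)), coe_nnnorm]
  exact norm_id_sub_smul_le_of_inner_bounds hA hγΓ (by linarith) hlow hupp

end SpectralBounds

theorem ContractingWith.dist_map_le_of_fixedPoint {α : Type*} [MetricSpace α] {K : ℝ≥0}
    {f : α → α} (hf : ContractingWith K f) (x : α) {y : α} (hy : Function.IsFixedPt f y) :
    dist (f x) y ≤ K / (1 - K) * dist x (f x) :=
  calc dist (f x) y = dist (f x) (f y) := by rw [hy.eq]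
    _ ≤ K * dist x y := hf.dist_le_mul x y
    _ ≤ K * (dist x (f x) / (1 - K)) := by gcongr; exact hf.dist_le_of_fixedPoint x hy
    _ = K / (1 - K) * dist x (f x) := by ring

theorem dist_le_inv_one_sub_mul_of_dist_le {α : Type*} [PseudoMetricSpace α] {a b c : α}
    {ν : ℝ} (hν : ν < 1) (h : dist a b ≤ ν * dist a c) : dist a c ≤ (1 - ν)⁻¹ * dist b c := by
  rw [inv_mul_eq_div, le_div_iff₀ (by linarith)]
  nlinarith [dist_triangle a b c]

theorem div_one_sub_mul_div_mul_le {ρ a b : ℝ} (hρ : ρ ≠ 1) (hab : 0 ≤ a / b) (hb : b ≠ 0) :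
    ρ / (1 - ρ) * ((1 - ρ) * a / (b * ρ)) ≤ a / b := by
  -- for `ρ = 0` the left-hand side is the junk value `0 * (x / 0) = 0`
  rcases eq_or_ne ρ 0 with rfl | hρ0
  · simpa using hab
  · have : 1 - ρ ≠ 0 := sub_ne_zero.2 hρ.symm
    exact (by field_simp : ρ / (1 - ρ) * ((1 - ρ) * a / (b * ρ)) = a / b).le

theorem aposteriori_threshold_criterion_general
    {H : Type*} [NormedAddCommGroup H] [InnerProductSpace ℝ H]
    (A : H →L[ℝ] H) (hsa : ∀ v w : H, ⟪A v, w⟫ = ⟪v, A w⟫)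
    (γ Γ : ℝ) (hγ : 0 < γ) (hγΓ : γ ≤ Γ)
    (hlow : ∀ v : H, γ * ‖v‖ ^ 2 ≤ ⟪A v, v⟫)
    (hupp : ∀ v : H, ⟪A v, v⟫ ≤ Γ * ‖v‖ ^ 2)
    (f ustar : H) (hsol : A ustar = f)
    (S : H → H) (hS : ∀ v w : H, ‖S v - S w‖ ≤ ‖v - w‖)
    (uα : H) (huα : uα = S (uα - (2 / (γ + Γ)) • (A uα - f)))
    (ν : ℝ) (hν0 : 0 < ν) (hν1 : ν < 1)
    (u uplus rplus : H)
    (huplus : uplus = S (u - (2 / (γ + Γ)) • (A u - f)))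
    (hrplus : rplus = A uplus - f)
    (hcrit : ‖uplus - u‖
        ≤ ((1 - (Γ - γ) / (Γ + γ)) * ν / (Γ * ((Γ - γ) / (Γ + γ)))) * ‖rplus‖) :
    ‖uplus - uα‖ ≤ ν * ‖uplus - ustar‖
    ∧ ‖uplus - ustar‖ ≤ (1 - ν)⁻¹ * ‖uα - ustar‖ := by
  have hΓ : 0 < Γ := hγ.trans_le hγΓ
  set ρ := (Γ - γ) / (Γ + γ)
  have hρ0 : 0 ≤ ρ := div_nonneg (by linarith) (by linarith)
  have hρ1 : ρ < 1 := (div_lt_one (by linarith)).2 (by linarith)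
  have hG := contractingWith_gradientStep hsa hγ hγΓ hlow hupp
    (LipschitzWith.mk_one (by simpa only [dist_eq_norm] using hS)) f
  have hstep : ‖uplus - uα‖ ≤ ρ / (1 - ρ) * ‖uplus - u‖ := by
    have := hG.dist_map_le_of_fixedPoint u huα.symm
    rwa [← huplus, Real.coe_toNNReal _ hρ0, dist_eq_norm, dist_comm, dist_eq_norm] at this
  have hres : ‖rplus‖ ≤ Γ * ‖uplus - ustar‖ := by
    rw [hrplus, ← hsol, ← map_sub]
    exact A.le_of_opNorm_le (norm_le_of_inner_bounds hsa hγ.le hΓ.le hlow hupp) _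
  have hfirst : ‖uplus - uα‖ ≤ ν * ‖uplus - ustar‖ := calc
    ‖uplus - uα‖ ≤ ρ / (1 - ρ) * ((1 - ρ) * ν / (Γ * ρ) * ‖rplus‖) :=
        hstep.trans (by gcongr)
    _ ≤ ν / Γ * ‖rplus‖ := by
        rw [← mul_assoc]
        gcongr
        exact div_one_sub_mul_div_mul_le hρ1.ne (by positivity) hΓ.ne'
    _ ≤ ν / Γ * (Γ * ‖uplus - ustar‖) := by gcongr
    _ = ν * ‖uplus - ustar‖ := by field_simp
  refine ⟨hfirst, ?_⟩
  simp only [← dist_eq_norm] at hfirst ⊢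
  exact dist_le_inv_one_sub_mul_of_dist_le hν1 hfirst

/-- **A posteriori criterion for decreasing the thresholding parameter.** Let `A` be bounded
self-adjoint with spectrum in `[γ, Γ]`, `μ = 2/(γ+Γ)`, `ρ = (Γ-γ)/(Γ+γ)`, `A u* = f`, `S`
non-expansive, and let `u^α` be the fixed point of `G(v) = S(v - μ(Av - f))`. If
`u₊ = G(u)`, `r₊ = A u₊ - f`, and `‖u₊ - u‖ ≤ ((1-ρ)ν/(Γρ))‖r₊‖` with `ν ∈ (0,1)`, then
`‖u₊ - u^α‖ ≤ ν‖u₊ - u*‖` and consequently `‖u₊ - u*‖ ≤ (1-ν)⁻¹‖u^α - u*‖`. -/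
theorem aposteriori_threshold_criterion
    {H : Type*} [NormedAddCommGroup H] [InnerProductSpace ℝ H] [CompleteSpace H]
    (A : H →L[ℝ] H) (hsa : ∀ v w : H, ⟪A v, w⟫ = ⟪v, A w⟫)
    (γ Γ : ℝ) (hγ : 0 < γ) (hγΓ : γ ≤ Γ)
    (hlow : ∀ v : H, γ * ‖v‖ ^ 2 ≤ ⟪A v, v⟫)
    (hupp : ∀ v : H, ⟪A v, v⟫ ≤ Γ * ‖v‖ ^ 2)
    (f ustar : H) (hsol : A ustar = f)
    (S : H → H) (hS : ∀ v w : H, ‖S v - S w‖ ≤ ‖v - w‖)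
    (uα : H) (huα : uα = S (uα - (2 / (γ + Γ)) • (A uα - f)))
    (ν : ℝ) (hν0 : 0 < ν) (hν1 : ν < 1)
    (u uplus rplus : H)
    (huplus : uplus = S (u - (2 / (γ + Γ)) • (A u - f)))
    (hrplus : rplus = A uplus - f)
    (hcrit : ‖uplus - u‖
        ≤ ((1 - (Γ - γ) / (Γ + γ)) * ν / (Γ * ((Γ - γ) / (Γ + γ)))) * ‖rplus‖) :
    ‖uplus - uα‖ ≤ ν * ‖uplus - ustar‖
    ∧ ‖uplus - ustar‖ ≤ (1 - ν)⁻¹ * ‖uα - ustar‖ :=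
  aposteriori_threshold_criterion_general A hsa γ Γ hγ hγΓ hlow hupp f ustar hsol S hS uα huα ν hν0
    hν1 u uplus rplus huplus hrplus hcrit
end
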